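/- arXiv:1906.01317 — 4 statements merged into one kernel-verified Lean document; each statement's English description precedes it below -/
import Mathlib

section
/- Let N ≥ 4, let ε > 0, let π = (π_ij) be a symmetric trace-free real (N−1)×(N−1) matrix, and let a₁, a₂ ∈ ℝ. Then the function Φ(x) = ε π_ij x_i x_j (|x̄|² + (x_N+1)²)^{−N/2} [ ((N−2)/2)(x_N − 1) + a₁(x_N+1)/(|x̄|² + (x_N+1)²)² + a₂/(|x̄|² + (x_N+1)²) ] satisfies −ΔΦ(x) = 2ε π_ij x_N ∂²W_{1,0}/∂x_i∂x_j (x) for all x ∈ ℝ^N_+. -/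
open MeasureTheory Filter Topology

noncomputable section

/-- The model for `ℝ^N_+`: pairs `(x̄, t)` with `x̄ ∈ ℝ^n` (Euclidean) and `t ∈ ℝ`;
the open upper half-space is `{p | 0 < p.2}`. -/
abbrev HSp (n : ℕ) := EuclideanSpace ℝ (Fin n) × ℝ

/-- The open upper half-space. -/
def upperHalf (n : ℕ) : Set (HSp n) := {p | 0 < p.2}

/-- Directional derivative of `f` at `x` in direction `v`. -/
def pdv {n : ℕ} (v : HSp n) (f : HSp n → ℝ) (x : HSp n) : ℝ := fderiv ℝ f x v

/-- The `i`-th horizontal standard basis vector. -/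
def eH {n : ℕ} (i : Fin n) : HSp n := (EuclideanSpace.single i 1, 0)

/-- The vertical standard basis vector. -/
def eV {n : ℕ} : HSp n := (0, 1)

/-- The Laplacian `Δf = ∑ᵢ ∂ᵢᵢ f + ∂_NN f`. -/
def lap {n : ℕ} (f : HSp n → ℝ) (x : HSp n) : ℝ :=
  (∑ i : Fin n, pdv (eH i) (pdv (eH i) f) x) + pdv eV (pdv eV f) x

/-- The Euclidean length `|x|` of a point `x = (x̄, t)`. -/
def rad {n : ℕ} (x : HSp n) : ℝ := Real.sqrt (‖x.1‖ ^ 2 + x.2 ^ 2)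

/-- The bubble `W_{λ,ξ}`. -/
def Bub (N : ℕ) (lam : ℝ) (ξ : EuclideanSpace ℝ (Fin (N - 1))) (x : HSp (N - 1)) : ℝ :=
  lam ^ (((N : ℝ) - 2) / 2) / (‖x.1 - ξ‖ ^ 2 + (x.2 + lam) ^ 2) ^ (((N : ℝ) - 2) / 2)

/-- The trace `w_{λ,ξ}` of the bubble on the boundary. -/
def bub (N : ℕ) (lam : ℝ) (ξ y : EuclideanSpace ℝ (Fin (N - 1))) : ℝ := Bub N lam ξ (y, 0)

/-! Write `ρ = |x̄|² + (x_N + 1)²` and `Q = π_ij x_i x_j`. Because `π` is trace-free, `Q` and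
`Q (x_N + 1)` are harmonic and homogeneous, of degrees `k = 2` and `k = 3`, about the pole
`(0, -1)`; for such a `P` the product rule and Euler's identity give
`Δ(P ρ^r) = 2r (2k + 2r + N - 2) P ρ^(r-1)`. `Φ` is a combination of four such terms; the
`a₁`- and `a₂`-terms are harmonic, and the other two add up to
`-2εN(N-2) x_N Q ρ^(-N/2-1)`. Since `W_{1,0} = ρ^(1-N/2)` and `π` is trace-free,
`π_ij ∂_ij W_{1,0} = N(N-2) Q ρ^(-N/2-1)`. -/

section Calculus

variable {n : ℕ} {f g : HSp n → ℝ} {x v w : HSp n}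

@[simp] lemma eH_fst (i : Fin n) : (eH i : HSp n).1 = EuclideanSpace.single i 1 := rfl
@[simp] lemma eH_snd (i : Fin n) : (eH i : HSp n).2 = 0 := rfl
@[simp] lemma eV_fst : (eV : HSp n).1 = 0 := rfl
@[simp] lemma eV_snd : (eV : HSp n).2 = 1 := rfl

lemma pdv_add (hf : DifferentiableAt ℝ f x) (hg : DifferentiableAt ℝ g x) :
    pdv v (fun y => f y + g y) x = pdv v f x + pdv v g x := by
  simp [pdv, fderiv_fun_add hf hg]

lemma pdv_mul (hf : DifferentiableAt ℝ f x) (hg : DifferentiableAt ℝ g x) :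
    pdv v (fun y => f y * g y) x = pdv v f x * g x + f x * pdv v g x := by
  simp [pdv, fderiv_fun_mul hf hg]
  ring

lemma pdv_const_mul (c : ℝ) : pdv v (fun y => c * f y) = fun y => c * pdv v f y := by
  ext y
  simp [pdv, ← smul_eq_mul, ← Pi.smul_def, fderiv_const_smul_field]

lemma pdv_rpow_const {r : ℝ} (hf : DifferentiableAt ℝ f x) (hx : f x ≠ 0) :
    pdv v (fun y => f y ^ r) x = r * f x ^ (r - 1) * pdv v f x := by
  simp [pdv, (hf.hasFDerivAt.rpow_const (Or.inl hx)).fderiv, mul_assoc]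

lemma differentiableAt_pdv (hf : ContDiffAt ℝ 2 f x) : DifferentiableAt ℝ (pdv v f) x :=
  ((hf.fderiv_right (m := 1) (by norm_num)).differentiableAt one_ne_zero).clm_apply
    (differentiableAt_const v)

lemma pdv_congr (h : f =ᶠ[𝓝 x] g) : pdv v f x = pdv v g x := by
  rw [pdv, h.fderiv_eq, pdv]

lemma pdv_pdv_congr (h : f =ᶠ[𝓝 x] g) : pdv w (pdv v f) x = pdv w (pdv v g) x :=
  pdv_congr (h.eventuallyEq_nhds.mono fun _ => pdv_congr)

lemma pdv_pdv_add (hf : ContDiffAt ℝ 2 f x) (hg : ContDiffAt ℝ 2 g x) :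
    pdv w (pdv v (fun y => f y + g y)) x = pdv w (pdv v f) x + pdv w (pdv v g) x := by
  have h : pdv v (fun y => f y + g y) =ᶠ[𝓝 x] fun y => pdv v f y + pdv v g y := by
    filter_upwards [hf.eventually (by simp), hg.eventually (by simp)] with y hfy hgy
    exact pdv_add (hfy.differentiableAt two_ne_zero) (hgy.differentiableAt two_ne_zero)
  rw [pdv_congr h, pdv_add (differentiableAt_pdv hf) (differentiableAt_pdv hg)]

lemma pdv_pdv_mul (hf : ContDiffAt ℝ 2 f x) (hg : ContDiffAt ℝ 2 g x) :
    pdv w (pdv v (fun y => f y * g y)) x =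
      pdv w (pdv v f) x * g x + pdv v f x * pdv w g x + pdv w f x * pdv v g x
        + f x * pdv w (pdv v g) x := by
  have hf1 := hf.differentiableAt two_ne_zero
  have hg1 := hg.differentiableAt two_ne_zero
  have h : pdv v (fun y => f y * g y) =ᶠ[𝓝 x] fun y => pdv v f y * g y + f y * pdv v g y := by
    filter_upwards [hf.eventually (by simp), hg.eventually (by simp)] with y hfy hgy
    exact pdv_mul (hfy.differentiableAt two_ne_zero) (hgy.differentiableAt two_ne_zero)
  rw [pdv_congr h, pdv_add (f := fun y => pdv v f y * g y) (g := fun y => f y * pdv v g y)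
    ((differentiableAt_pdv hf).mul hg1) (hf1.mul (differentiableAt_pdv hg)),
    pdv_mul (differentiableAt_pdv hf) hg1, pdv_mul hf1 (differentiableAt_pdv hg)]
  ring

lemma lap_congr (h : f =ᶠ[𝓝 x] g) : lap f x = lap g x := by
  simp only [lap, pdv_pdv_congr h]

lemma lap_add (hf : ContDiffAt ℝ 2 f x) (hg : ContDiffAt ℝ 2 g x) :
    lap (fun y => f y + g y) x = lap f x + lap g x := by
  simp only [lap, pdv_pdv_add hf hg, Finset.sum_add_distrib]
  ring

lemma lap_const_mul (c : ℝ) : lap (fun y => c * f y) x = c * lap f x := by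
  simp only [lap, pdv_const_mul, mul_add, Finset.mul_sum]

lemma lap_mul (hf : ContDiffAt ℝ 2 f x) (hg : ContDiffAt ℝ 2 g x) :
    lap (fun y => f y * g y) x = lap f x * g x
      + 2 * (∑ i, pdv (eH i) f x * pdv (eH i) g x + pdv eV f x * pdv eV g x)
      + f x * lap g x := by
  simp only [lap, pdv_pdv_mul hf hg, Finset.sum_add_distrib, ← Finset.sum_mul, ← Finset.mul_sum]
  ring

lemma pdv_pdv_rpow_const {r : ℝ} (hf : ContDiffAt ℝ 2 f x) (hx : f x ≠ 0) :
    pdv w (pdv v (fun y => f y ^ r)) x =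
      r * ((r - 1) * f x ^ (r - 2) * pdv w f x * pdv v f x
        + f x ^ (r - 1) * pdv w (pdv v f) x) := by
  have h : pdv v (fun y => f y ^ r) =ᶠ[𝓝 x] fun y => r * (f y ^ (r - 1) * pdv v f y) := by
    filter_upwards [hf.eventually (by simp), hf.continuousAt.eventually_ne hx] with y hfy hy
    rw [pdv_rpow_const (hfy.differentiableAt two_ne_zero) hy, mul_assoc]
  have hd := hf.differentiableAt two_ne_zero
  rw [pdv_congr h, pdv_const_mul]
  dsimp only
  rw [pdv_mul (hd.rpow_const (Or.inl hx)) (differentiableAt_pdv hf),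
    pdv_rpow_const hd hx, show r - 1 - 1 = r - 2 by ring]

end Calculus

def shiftedNormSq {n : ℕ} (y : HSp n) : ℝ := ‖y.1‖ ^ 2 + (y.2 + 1) ^ 2

def quadForm {n : ℕ} (π : Fin n → Fin n → ℝ) (y : HSp n) : ℝ := ∑ i, ∑ j, π i j * y.1 i * y.1 j

section Model

variable {n : ℕ} {x v w : HSp n} {π : Fin n → Fin n → ℝ}

@[fun_prop]
lemma contDiff_shiftedNormSq : ContDiff ℝ 2 (shiftedNormSq (n := n)) :=
  (contDiff_fst.norm_sq ℝ).add ((contDiff_snd.add contDiff_const).pow 2)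

lemma pdv_shiftedNormSq (y : HSp n) :
    pdv v shiftedNormSq y = 2 * (inner ℝ y.1 v.1 + (y.2 + 1) * v.2) := by
  have h : HasFDerivAt shiftedNormSq _ y :=
    (hasFDerivAt_fst (p := y)).norm_sq.add (((hasFDerivAt_snd (p := y)).add_const 1).pow 2)
  rw [pdv, h.fderiv]
  simp
  ring

lemma pdv_pdv_shiftedNormSq (y : HSp n) :
    pdv w (pdv v shiftedNormSq) y = 2 * (inner ℝ v.1 w.1 + v.2 * w.2) := by
  have h : HasFDerivAt (fun y : HSp n => 2 * (inner ℝ y.1 v.1 + (y.2 + 1) * v.2)) _ y :=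
    (((hasFDerivAt_fst (p := y)).inner ℝ (hasFDerivAt_const v.1 y)).add
      (((hasFDerivAt_snd (p := y)).add_const 1).mul_const v.2)).const_mul 2
  rw [pdv, show pdv v shiftedNormSq = _ from funext pdv_shiftedNormSq, h.fderiv]
  simp [real_inner_comm]
  ring

lemma lap_rpow_shiftedNormSq {r : ℝ} (hx : 0 < shiftedNormSq x) :
    lap (fun y => shiftedNormSq y ^ r) x =
      2 * r * (2 * r + n - 1) * shiftedNormSq x ^ (r - 1) := by
  simp only [lap, pdv_pdv_rpow_const contDiff_shiftedNormSq.contDiffAt hx.ne',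
    pdv_shiftedNormSq, pdv_pdv_shiftedNormSq]
  have hsum : ∑ i, x.1 i ^ 2 = shiftedNormSq x - (x.2 + 1) ^ 2 := by
    rw [← EuclideanSpace.real_norm_sq_eq, shiftedNormSq]; ring
  have hsq (a b : ℝ) : a * (2 * b) * (2 * b) = 4 * a * b ^ 2 := by ring
  simp [EuclideanSpace.inner_single_right, Finset.sum_add_distrib, ← Finset.mul_sum, hsq, hsum]
  rw [show r - 2 = r - 1 - 1 by ring, Real.rpow_sub_one hx.ne']
  field_simp
  ring

lemma lap_mul_rpow_shiftedNormSq {P : HSp n → ℝ} {k r : ℝ} (hP : ContDiffAt ℝ 2 P x)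
    (hharm : lap P x = 0)
    -- Euler's identity for `P` homogeneous of degree `k` about the pole `(0, -1)`
    (hhom : ∑ i, pdv (eH i) P x * x.1 i + pdv eV P x * (x.2 + 1) = k * P x)
    (hx : 0 < shiftedNormSq x) :
    lap (fun y => P y * shiftedNormSq y ^ r) x =
      2 * r * (2 * k + 2 * r + n - 1) * P x * shiftedNormSq x ^ (r - 1) := by
  have hρ : ContDiffAt ℝ 2 shiftedNormSq x := contDiff_shiftedNormSq.contDiffAt
  have hgrad : ∑ i, pdv (eH i) P x * pdv (eH i) (fun y => shiftedNormSq y ^ r) x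
      + pdv eV P x * pdv eV (fun y => shiftedNormSq y ^ r) x
      = 2 * r * shiftedNormSq x ^ (r - 1) * (k * P x) := by
    rw [← hhom, mul_add, Finset.mul_sum]
    simp only [pdv_rpow_const (hρ.differentiableAt two_ne_zero) hx.ne', pdv_shiftedNormSq]
    congr 1
    · exact Finset.sum_congr rfl fun i _ => by simp [EuclideanSpace.inner_single_right]; ring
    · simp; ring
  rw [lap_mul hP (hρ.rpow_const_of_ne hx.ne'), hharm, lap_rpow_shiftedNormSq hx, hgrad]
  ring

lemma pdv_snd_add_one (y : HSp n) : pdv v (fun y : HSp n => y.2 + 1) y = v.2 := by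
  have h : HasFDerivAt (fun y : HSp n => y.2 + 1) _ y :=
    (hasFDerivAt_snd (𝕜 := ℝ) (p := y)).add_const 1
  simp [pdv, h.fderiv]

lemma pdv_pdv_snd_add_one (y : HSp n) : pdv w (pdv v (fun y : HSp n => y.2 + 1)) y = 0 := by
  simp [pdv, show pdv v (fun y : HSp n => y.2 + 1) = fun _ => v.2 from funext pdv_snd_add_one]

lemma hasFDerivAt_coord (i : Fin n) (y : HSp n) :
    HasFDerivAt (fun y : HSp n => y.1 i)
      ((EuclideanSpace.proj i).comp (ContinuousLinearMap.fst ℝ _ ℝ)) y :=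
  ((EuclideanSpace.proj i).comp (ContinuousLinearMap.fst ℝ _ ℝ)).hasFDerivAt

@[fun_prop]
lemma contDiff_quadForm : ContDiff ℝ 2 (quadForm π) := by
  unfold quadForm; fun_prop

lemma pdv_quadForm (y : HSp n) :
    pdv v (quadForm π) y = ∑ i, ∑ j, π i j * (v.1 i * y.1 j + y.1 i * v.1 j) := by
  have h : HasFDerivAt (quadForm π) _ y := HasFDerivAt.fun_sum fun i _ => HasFDerivAt.fun_sum
    fun j _ => ((hasFDerivAt_coord i y).const_mul (π i j)).mul (hasFDerivAt_coord j y)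
  simp only [pdv, h.fderiv]
  simp
  exact Finset.sum_congr rfl fun i _ => Finset.sum_congr rfl fun j _ => by ring

lemma pdv_pdv_quadForm (y : HSp n) :
    pdv w (pdv v (quadForm π)) y = ∑ i, ∑ j, π i j * (v.1 i * w.1 j + w.1 i * v.1 j) := by
  have h : HasFDerivAt
      (fun y : HSp n => ∑ i, ∑ j, π i j * (v.1 i * y.1 j + y.1 i * v.1 j)) _ y :=
    HasFDerivAt.fun_sum fun i _ => HasFDerivAt.fun_sum fun j _ =>
      ((((hasFDerivAt_coord j y).const_mul (v.1 i)).add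
        ((hasFDerivAt_coord i y).mul_const (v.1 j))).const_mul (π i j))
  rw [pdv, show pdv v (quadForm π) = _ from funext pdv_quadForm, h.fderiv]
  simp
  exact Finset.sum_congr rfl fun i _ => Finset.sum_congr rfl fun j _ => by ring

lemma pdv_eH_quadForm (k : Fin n) (y : HSp n) :
    pdv (eH k) (quadForm π) y = ∑ j, π k j * y.1 j + ∑ i, π i k * y.1 i := by
  simp [pdv_quadForm, mul_add, Finset.sum_add_distrib, ite_mul, mul_ite, Finset.sum_ite_eq']

lemma pdv_eV_quadForm (y : HSp n) : pdv eV (quadForm π) y = 0 := by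
  simp [pdv_quadForm]

lemma lap_quadForm (htrace : ∑ i, π i i = 0) : lap (quadForm π) x = 0 := by
  simp [lap, pdv_pdv_quadForm, mul_add, Finset.sum_add_distrib, mul_ite, Finset.sum_ite_eq',
    htrace]

lemma euler_quadForm :
    ∑ i, pdv (eH i) (quadForm π) x * x.1 i + pdv eV (quadForm π) x * (x.2 + 1)
      = 2 * quadForm π x := by
  simp only [pdv_eH_quadForm, pdv_eV_quadForm, zero_mul, add_zero, add_mul,
    Finset.sum_add_distrib, Finset.sum_mul, quadForm, two_mul]
  congr 1
  · exact Finset.sum_congr rfl fun i _ => Finset.sum_congr rfl fun j _ => by ring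
  · exact Finset.sum_comm

lemma lap_quadForm_mul_snd_add_one (htrace : ∑ i, π i i = 0) :
    lap (fun y => quadForm π y * (y.2 + 1)) x = 0 := by
  rw [lap_mul contDiff_quadForm.contDiffAt (by fun_prop), lap_quadForm htrace]
  simp [lap, pdv_snd_add_one, pdv_pdv_snd_add_one, pdv_eV_quadForm]

lemma euler_quadForm_mul_snd_add_one :
    ∑ i, pdv (eH i) (fun y => quadForm π y * (y.2 + 1)) x * x.1 i
      + pdv eV (fun y => quadForm π y * (y.2 + 1)) x * (x.2 + 1)
      = 3 * (quadForm π x * (x.2 + 1)) := by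
  have hQ := (contDiff_quadForm (π := π)).differentiable two_ne_zero x
  have hh : DifferentiableAt ℝ (fun y : HSp n => y.2 + 1) x := by fun_prop
  have h := euler_quadForm (π := π) (x := x)
  simp only [pdv_mul hQ hh, pdv_snd_add_one, pdv_eV_quadForm, eH_snd, eV_snd, mul_zero, add_zero,
    zero_mul, zero_add, mul_one] at h ⊢
  simp only [mul_right_comm _ (x.2 + 1)]
  rw [← Finset.sum_mul, h]
  ring

lemma lap_quadForm_mul_rpow {r : ℝ} (htrace : ∑ i, π i i = 0) (hx : 0 < shiftedNormSq x) :
    lap (fun y => quadForm π y * shiftedNormSq y ^ r) x =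
      2 * r * (2 * r + n + 3) * quadForm π x * shiftedNormSq x ^ (r - 1) := by
  rw [lap_mul_rpow_shiftedNormSq contDiff_quadForm.contDiffAt (lap_quadForm htrace)
    euler_quadForm hx]
  ring

lemma lap_quadForm_mul_snd_add_one_mul_rpow {r : ℝ} (htrace : ∑ i, π i i = 0)
    (hx : 0 < shiftedNormSq x) :
    lap (fun y => quadForm π y * (y.2 + 1) * shiftedNormSq y ^ r) x =
      2 * r * (2 * r + n + 5) * quadForm π x * (x.2 + 1) * shiftedNormSq x ^ (r - 1) := by
  rw [lap_mul_rpow_shiftedNormSq (by fun_prop) (lap_quadForm_mul_snd_add_one htrace)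
    euler_quadForm_mul_snd_add_one hx]
  ring

lemma sum_mul_pdv_pdv_rpow_shiftedNormSq {s : ℝ} (htrace : ∑ i, π i i = 0)
    (hx : 0 < shiftedNormSq x) :
    ∑ i, ∑ j, π i j * pdv (eH i) (pdv (eH j) (fun y => shiftedNormSq y ^ s)) x =
      4 * s * (s - 1) * quadForm π x * shiftedNormSq x ^ (s - 2) := by
  simp [pdv_pdv_rpow_const contDiff_shiftedNormSq.contDiffAt hx.ne', pdv_shiftedNormSq,
    pdv_pdv_shiftedNormSq, EuclideanSpace.inner_single_right, mul_add, Finset.sum_add_distrib,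
    mul_ite, Finset.sum_ite_eq]
  rw [← Finset.sum_mul, htrace, zero_mul, add_zero]
  simp only [quadForm, Finset.mul_sum, Finset.sum_mul]
  exact Finset.sum_congr rfl fun i _ => Finset.sum_congr rfl fun j _ => by ring

end Model

lemma div_rpow_mul_expand {ρ : ℝ} (hρ : 0 < ρ) (ε q t m b a₁ a₂ : ℝ) :
    ε * q / ρ ^ m * (b * (t - 1) + a₁ * (t + 1) / ρ ^ 2 + a₂ / ρ) =
      ε * b * (q * (t + 1) * ρ ^ (-m)) + -2 * ε * b * (q * ρ ^ (-m))
        + ε * a₁ * (q * (t + 1) * ρ ^ (-m - 2)) + ε * a₂ * (q * ρ ^ (-m - 1)) := by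
  rw [Real.rpow_sub hρ, Real.rpow_sub hρ, Real.rpow_neg hρ.le, Real.rpow_two, Real.rpow_one]
  field_simp
  ring

theorem Phi_solves_interior_equation_general (N : ℕ) (hN : 4 ≤ N) (ε : ℝ)
    (π : Fin (N - 1) → Fin (N - 1) → ℝ)
    (htrace : ∑ i, π i i = 0)
    (a₁ a₂ : ℝ) (Φ : HSp (N - 1) → ℝ)
    (hΦ : ∀ x : HSp (N - 1), Φ x =
      ε * (∑ i, ∑ j, π i j * x.1 i * x.1 j) /
          (‖x.1‖ ^ 2 + (x.2 + 1) ^ 2) ^ ((N : ℝ) / 2) *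
        (((N : ℝ) - 2) / 2 * (x.2 - 1)
          + a₁ * (x.2 + 1) / (‖x.1‖ ^ 2 + (x.2 + 1) ^ 2) ^ 2
          + a₂ / (‖x.1‖ ^ 2 + (x.2 + 1) ^ 2))) :
    ∀ x ∈ upperHalf (N - 1), -(lap Φ x) =
      2 * ε * x.2 * ∑ i, ∑ j, π i j * pdv (eH i) (pdv (eH j) (Bub N 1 0)) x := by
  intro x hx
  have hρ : 0 < shiftedNormSq x := by
    have : 0 < x.2 := hx
    unfold shiftedNormSq; positivity
  have hΦx : Φ =ᶠ[𝓝 x] fun y =>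
      ε * (((N : ℝ) - 2) / 2) * (quadForm π y * (y.2 + 1) * shiftedNormSq y ^ (-((N : ℝ) / 2)))
        + -2 * ε * (((N : ℝ) - 2) / 2) * (quadForm π y * shiftedNormSq y ^ (-((N : ℝ) / 2)))
        + ε * a₁ * (quadForm π y * (y.2 + 1) * shiftedNormSq y ^ (-((N : ℝ) / 2) - 2))
        + ε * a₂ * (quadForm π y * shiftedNormSq y ^ (-((N : ℝ) / 2) - 1)) := by
    filter_upwards [continuousAt_const.eventually_lt
      contDiff_shiftedNormSq.continuous.continuousAt hρ] with y hy
    exact (hΦ y).trans (div_rpow_mul_expand hy _ _ _ _ _ _ _)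
  have hBub : Bub N 1 0 = fun y => shiftedNormSq y ^ (-(((N : ℝ) - 2) / 2)) := by
    funext y
    rw [Bub, Real.one_rpow, sub_zero, one_div, ← Real.rpow_neg (by positivity)]
    rfl
  rw [lap_congr hΦx, lap_add, lap_add, lap_add, lap_const_mul, lap_const_mul, lap_const_mul, lap_const_mul,
    lap_quadForm_mul_snd_add_one_mul_rpow htrace hρ, lap_quadForm_mul_rpow htrace hρ,
    lap_quadForm_mul_snd_add_one_mul_rpow htrace hρ, lap_quadForm_mul_rpow htrace hρ,
    hBub, sum_mul_pdv_pdv_rpow_shiftedNormSq htrace hρ,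
    show -(((N : ℝ) - 2) / 2) - 2 = -((N : ℝ) / 2) - 1 by ring,
    Nat.cast_sub (by omega : 1 ≤ N)]
  · push_cast
    ring
  all_goals fun_prop (disch := exact hρ.ne')

/-- the explicit function `Φ` solves `-ΔΦ = 2ε π_ij x_N ∂²_{ij} W_{1,0}`
in the upper half-space. -/
theorem Phi_solves_interior_equation (N : ℕ) (hN : 4 ≤ N) (ε : ℝ) (hε : 0 < ε)
    (π : Fin (N - 1) → Fin (N - 1) → ℝ)
    (hsym : ∀ i j, π i j = π j i) (htrace : ∑ i, π i i = 0)
    (a₁ a₂ : ℝ) (Φ : HSp (N - 1) → ℝ)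
    (hΦ : ∀ x : HSp (N - 1), Φ x =
      ε * (∑ i, ∑ j, π i j * x.1 i * x.1 j) /
          (‖x.1‖ ^ 2 + (x.2 + 1) ^ 2) ^ ((N : ℝ) / 2) *
        (((N : ℝ) - 2) / 2 * (x.2 - 1)
          + a₁ * (x.2 + 1) / (‖x.1‖ ^ 2 + (x.2 + 1) ^ 2) ^ 2
          + a₂ / (‖x.1‖ ^ 2 + (x.2 + 1) ^ 2))) :
    ∀ x ∈ upperHalf (N - 1), -(lap Φ x) =
      2 * ε * x.2 * ∑ i, ∑ j, π i j * pdv (eH i) (pdv (eH j) (Bub N 1 0)) x :=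
  Phi_solves_interior_equation_general N hN ε π htrace a₁ a₂ Φ hΦ
end
end

section
/- Let N ≥ 4, ε > 0, let π = (π_ij) be a symmetric trace-free real (N−1)×(N−1) matrix, a₁, a₂ ∈ ℝ, and let Ψ be a smooth solution on the closed upper half-space of −ΔΨ = 2ε π_ij x_N ∂²W_{1,0}/∂x_i∂x_j in ℝ^N_+ with −lim_{x_N→0} ∂Ψ/∂x_N = N w_{1,0}^{2/(N−2)} Ψ on ℝ^{N−1}. Define Φ(x) = ε π_ij x_i x_j (|x̄|² + (x_N+1)²)^{−N/2} [ ((N−2)/2)(x_N − 1) + a₁(x_N+1)/(|x̄|² + (x_N+1)²)² + a₂/(|x̄|² + (x_N+1)²) ]. Then Ξ = Ψ − Φ is harmonic in ℝ^N_+ and satisfies −lim_{x_N→0} ∂Ξ/∂x_N = N w_{1,0}^{2/(N−2)} Ξ + q on ℝ^{N−1}, where q(x̄) = ε π_ij x_i x_j (|x̄|²+1)^{−N/2} [ (N−2)/2 + a₁( (|x̄|²+1)^{−2} − 4(|x̄|²+1)^{−3} ) − 2a₂ (|x̄|²+1)^{−2} ]. -/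
open MeasureTheory Filter Topology

noncomputable section

namespace Xaux
variable {n : ℕ}

lemma hasF_coord (i : Fin n) (x : HSp n) :
    HasFDerivAt (fun p : HSp n => p.1 i)
      ((EuclideanSpace.proj i).comp (ContinuousLinearMap.fst ℝ (EuclideanSpace ℝ (Fin n)) ℝ)) x :=
  ((EuclideanSpace.proj i).comp (ContinuousLinearMap.fst ℝ _ ℝ)).hasFDerivAt

lemma hasF_snd (x : HSp n) :
    HasFDerivAt (fun p : HSp n => p.2) (ContinuousLinearMap.snd ℝ (EuclideanSpace ℝ (Fin n)) ℝ) x :=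
  hasFDerivAt_snd

@[simp] lemma eH_fst (i j : Fin n) : (eH (n := n) i).1 j = if j = i then (1:ℝ) else 0 :=
  EuclideanSpace.single_apply i 1 j
@[simp] lemma eH_snd (i : Fin n) : (eH (n := n) i).2 = 0 := rfl
@[simp] lemma eV_fst (j : Fin n) : (eV (n := n)).1 j = 0 := rfl
@[simp] lemma eV_snd : (eV (n := n)).2 = 1 := rfl

@[simp] lemma coordCLM_eH (i j : Fin n) :
    ((EuclideanSpace.proj j).comp (ContinuousLinearMap.fst ℝ (EuclideanSpace ℝ (Fin n)) ℝ)) (eH i)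
      = if j = i then (1:ℝ) else 0 := by
  simp [eH, EuclideanSpace.single_apply]

@[simp] lemma coordCLM_eV (j : Fin n) :
    ((EuclideanSpace.proj j).comp (ContinuousLinearMap.fst ℝ (EuclideanSpace ℝ (Fin n)) ℝ)) (eV)
      = (0:ℝ) := by simp [eV]

@[simp] lemma sndCLM_eH (i : Fin n) :
    (ContinuousLinearMap.snd ℝ (EuclideanSpace ℝ (Fin n)) ℝ) (eH i) = (0:ℝ) := by simp [eH]

@[simp] lemma sndCLM_eV :
    (ContinuousLinearMap.snd ℝ (EuclideanSpace ℝ (Fin n)) ℝ) (eV : HSp n) = (1:ℝ) := by simp [eV]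

variable (π : Fin n → Fin n → ℝ)

def pq (x : HSp n) : ℝ := ∑ i, ∑ j, π i j * x.1 i * x.1 j
def L (k : Fin n) (x : HSp n) : ℝ := ∑ j, π k j * x.1 j
def Rf (x : HSp n) : ℝ := (∑ i, x.1 i * x.1 i) + (x.2 + 1) * (x.2 + 1)
def Om : Set (HSp n) := {x | 0 < Rf x}

lemma hasF_pq (x : HSp n) :
    HasFDerivAt (pq π)
      (∑ i : Fin n, ∑ j : Fin n,
        ((π i j * x.1 i) • ((EuclideanSpace.proj j).comp (ContinuousLinearMap.fst ℝ (EuclideanSpace ℝ (Fin n)) ℝ))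
          + x.1 j • ((π i j) • ((EuclideanSpace.proj i).comp (ContinuousLinearMap.fst ℝ (EuclideanSpace ℝ (Fin n)) ℝ))))) x := by
  apply HasFDerivAt.fun_sum
  intro i _
  apply HasFDerivAt.fun_sum
  intro j _
  exact ((hasF_coord i x).const_mul (π i j)).mul (hasF_coord j x)

lemma pdv_pq_eH (hsym : ∀ i j, π i j = π j i) (k : Fin n) (x : HSp n) :
    pdv (eH k) (pq π) x = 2 * L π k x := by
  rw [pdv, (hasF_pq π x).fderiv]
  simp only [ContinuousLinearMap.sum_apply, ContinuousLinearMap.add_apply,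
    ContinuousLinearMap.smul_apply, coordCLM_eH, smul_eq_mul, mul_ite, mul_one, mul_zero,
    Finset.sum_add_distrib, Finset.sum_ite_eq', Finset.sum_ite_eq, Finset.mem_univ, if_true]
  have h2 : ∀ i : Fin n, (∑ j, if i = k then x.1 j * π i j else 0)
      = if i = k then ∑ j, x.1 j * π i j else 0 := by
    intro i; split <;> simp
  simp only [h2, Finset.sum_ite_eq', Finset.mem_univ, if_true]
  unfold L
  rw [Finset.mul_sum, ← Finset.sum_add_distrib]
  apply Finset.sum_congr rfl
  intro i _
  rw [hsym i k]
  ring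

lemma pdv_pq_eV (x : HSp n) : pdv eV (pq π) x = 0 := by
  rw [pdv, (hasF_pq π x).fderiv]
  simp [ContinuousLinearMap.sum_apply, eV]

lemma pdv_coord_eH (i j : Fin n) (x : HSp n) :
    pdv (eH i) (fun p : HSp n => p.1 j) x = if j = i then (1:ℝ) else 0 := by
  rw [pdv, (hasF_coord j x).fderiv]; simp

lemma pdv_coord_eV (j : Fin n) (x : HSp n) :
    pdv eV (fun p : HSp n => p.1 j) x = 0 := by
  rw [pdv, (hasF_coord j x).fderiv]; simp

end Xaux

namespace Xaux
variable {n : ℕ} (π : Fin n → Fin n → ℝ)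

lemma hasF_L (k : Fin n) (x : HSp n) :
    HasFDerivAt (L π k)
      (∑ j : Fin n, (π k j) •
        ((EuclideanSpace.proj j).comp (ContinuousLinearMap.fst ℝ (EuclideanSpace ℝ (Fin n)) ℝ))) x := by
  apply HasFDerivAt.fun_sum
  intro j _
  exact (hasF_coord j x).const_mul (π k j)

lemma pdv_L_eH (k i : Fin n) (x : HSp n) : pdv (eH i) (L π k) x = π k i := by
  rw [pdv, (hasF_L π k x).fderiv]
  simp [ContinuousLinearMap.sum_apply, Finset.sum_ite_eq', mul_ite]

lemma pdv_L_eV (k : Fin n) (x : HSp n) : pdv eV (L π k) x = 0 := by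
  rw [pdv, (hasF_L π k x).fderiv]
  simp [ContinuousLinearMap.sum_apply]

lemma hasF_Rf (x : HSp n) :
    HasFDerivAt (Rf (n := n))
      ((∑ i : Fin n, (x.1 i •
          ((EuclideanSpace.proj i).comp (ContinuousLinearMap.fst ℝ (EuclideanSpace ℝ (Fin n)) ℝ))
        + x.1 i • ((EuclideanSpace.proj i).comp (ContinuousLinearMap.fst ℝ (EuclideanSpace ℝ (Fin n)) ℝ))))
        + ((x.2 + 1) • (ContinuousLinearMap.snd ℝ (EuclideanSpace ℝ (Fin n)) ℝ)
          + (x.2 + 1) • (ContinuousLinearMap.snd ℝ (EuclideanSpace ℝ (Fin n)) ℝ))) x := by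
  apply HasFDerivAt.add
  · apply HasFDerivAt.fun_sum
    intro i _
    exact (hasF_coord i x).mul (hasF_coord i x)
  · exact ((hasF_snd x).add_const 1).mul ((hasF_snd x).add_const 1)

lemma pdv_Rf_eH (i : Fin n) (x : HSp n) : pdv (eH i) (Rf (n := n)) x = 2 * x.1 i := by
  rw [pdv, (hasF_Rf x).fderiv]
  simp [ContinuousLinearMap.sum_apply, Finset.sum_add_distrib, Finset.sum_ite_eq']
  ring

lemma pdv_Rf_eV (x : HSp n) : pdv eV (Rf (n := n)) x = 2 * (x.2 + 1) := by
  rw [pdv, (hasF_Rf x).fderiv]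
  simp [ContinuousLinearMap.sum_apply]
  ring

end Xaux

namespace Xaux
variable {n : ℕ} (π : Fin n → Fin n → ℝ)

/-! ### pdv arithmetic -/

lemma pdv_mul {f g : HSp n → ℝ} {x : HSp n} (v : HSp n)
    (hf : DifferentiableAt ℝ f x) (hg : DifferentiableAt ℝ g x) :
    pdv v (fun y => f y * g y) x = f x * pdv v g x + g x * pdv v f x := by
  rw [pdv, fderiv_fun_mul hf hg]
  simp only [ContinuousLinearMap.add_apply, ContinuousLinearMap.smul_apply, smul_eq_mul]
  rfl

lemma pdv_add {f g : HSp n → ℝ} {x : HSp n} (v : HSp n)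
    (hf : DifferentiableAt ℝ f x) (hg : DifferentiableAt ℝ g x) :
    pdv v (fun y => f y + g y) x = pdv v f x + pdv v g x := by
  rw [pdv, fderiv_fun_add hf hg]; rfl

lemma pdv_cmul {f : HSp n → ℝ} {x : HSp n} (v : HSp n) (c : ℝ) (hf : DifferentiableAt ℝ f x) :
    pdv v (fun y => c * f y) x = c * pdv v f x := by
  rw [pdv, fderiv_const_mul hf c]
  simp only [ContinuousLinearMap.smul_apply, smul_eq_mul]
  rfl

lemma pdv_congr_on {U : Set (HSp n)} (hU : IsOpen U) {f g : HSp n → ℝ}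
    (h : ∀ y ∈ U, f y = g y) {x : HSp n} (hx : x ∈ U) (v : HSp n) :
    pdv v f x = pdv v g x := by
  rw [pdv, Filter.EventuallyEq.fderiv_eq (Filter.eventuallyEq_of_mem (hU.mem_nhds hx) h)]; rfl

lemma diffAt_congr_on {U : Set (HSp n)} (hU : IsOpen U) {f g : HSp n → ℝ}
    (h : ∀ y ∈ U, f y = g y) {x : HSp n} (hx : x ∈ U) (hg : DifferentiableAt ℝ g x) :
    DifferentiableAt ℝ f x :=
  (Filter.EventuallyEq.differentiableAt_iff
    (Filter.eventuallyEq_of_mem (hU.mem_nhds hx) h)).mpr hg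

/-! ### differentiability atoms -/

lemma diff_pq (x : HSp n) : DifferentiableAt ℝ (pq π) x := (hasF_pq π x).differentiableAt
lemma diff_L (k : Fin n) (x : HSp n) : DifferentiableAt ℝ (L π k) x := (hasF_L π k x).differentiableAt
lemma diff_Rf (x : HSp n) : DifferentiableAt ℝ (Rf (n := n)) x := (hasF_Rf x).differentiableAt
lemma diff_coord (j : Fin n) (x : HSp n) : DifferentiableAt ℝ (fun p : HSp n => p.1 j) x :=
  (hasF_coord j x).differentiableAt
lemma diff_s1 (x : HSp n) : DifferentiableAt ℝ (fun p : HSp n => p.2 + 1) x :=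
  ((hasF_snd x).add_const 1).differentiableAt

lemma isOpen_Om : IsOpen (Om (n := n)) := by
  have : Continuous (Rf (n := n)) := by
    unfold Rf; fun_prop
  exact isOpen_lt continuous_const this

/-! ### powers of Rf -/

def P (γ : ℝ) (x : HSp n) : ℝ := Rf x ^ γ

lemma hasF_P (γ : ℝ) {x : HSp n} (hx : Rf x ≠ 0) :
    HasFDerivAt (P (n := n) γ) ((γ * Rf x ^ (γ - 1)) •
      ((∑ i : Fin n, (x.1 i •
          ((EuclideanSpace.proj i).comp (ContinuousLinearMap.fst ℝ (EuclideanSpace ℝ (Fin n)) ℝ))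
        + x.1 i • ((EuclideanSpace.proj i).comp (ContinuousLinearMap.fst ℝ (EuclideanSpace ℝ (Fin n)) ℝ))))
        + ((x.2 + 1) • (ContinuousLinearMap.snd ℝ (EuclideanSpace ℝ (Fin n)) ℝ)
          + (x.2 + 1) • (ContinuousLinearMap.snd ℝ (EuclideanSpace ℝ (Fin n)) ℝ)))) x :=
  (hasF_Rf x).rpow_const (Or.inl hx)

lemma diff_P (γ : ℝ) {x : HSp n} (hx : Rf x ≠ 0) : DifferentiableAt ℝ (P (n := n) γ) x :=
  (hasF_P γ hx).differentiableAt

lemma pdv_P_eH (γ : ℝ) (i : Fin n) {x : HSp n} (hx : Rf x ≠ 0) :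
    pdv (eH i) (P (n := n) γ) x = 2 * γ * Rf x ^ (γ - 1) * x.1 i := by
  rw [pdv, (hasF_P γ hx).fderiv]
  simp [ContinuousLinearMap.sum_apply, Finset.sum_add_distrib, Finset.sum_ite_eq']
  ring

lemma pdv_P_eV (γ : ℝ) {x : HSp n} (hx : Rf x ≠ 0) :
    pdv eV (P (n := n) γ) x = 2 * γ * Rf x ^ (γ - 1) * (x.2 + 1) := by
  rw [pdv, (hasF_P γ hx).fderiv]
  simp [ContinuousLinearMap.sum_apply]
  ring

end Xaux

namespace Xaux
variable {n : ℕ} (π : Fin n → Fin n → ℝ)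

/-! ### the model functions K0, K1 and their derivatives -/

def K0 (γ : ℝ) (x : HSp n) : ℝ := pq π x * P γ x
def K1 (γ : ℝ) (x : HSp n) : ℝ := K0 π γ x * (x.2 + 1)
def K0H (γ : ℝ) (i : Fin n) (x : HSp n) : ℝ :=
  2 * L π i x * P γ x + 2 * γ * pq π x * P (γ - 1) x * x.1 i
def K0V (γ : ℝ) (x : HSp n) : ℝ := 2 * γ * pq π x * P (γ - 1) x * (x.2 + 1)
def K1H (γ : ℝ) (i : Fin n) (x : HSp n) : ℝ := K0H π γ i x * (x.2 + 1)
def K1V (γ : ℝ) (x : HSp n) : ℝ := K0V π γ x * (x.2 + 1) + K0 π γ x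

lemma diff_K0 (γ : ℝ) {x : HSp n} (hx : Rf x ≠ 0) : DifferentiableAt ℝ (K0 π γ) x :=
  (diff_pq π x).mul (diff_P γ hx)

lemma diff_K1 (γ : ℝ) {x : HSp n} (hx : Rf x ≠ 0) : DifferentiableAt ℝ (K1 π γ) x :=
  (diff_K0 π γ hx).mul (diff_s1 x)

lemma diff_K0H (γ : ℝ) (i : Fin n) {x : HSp n} (hx : Rf x ≠ 0) :
    DifferentiableAt ℝ (K0H π γ i) x := by
  apply DifferentiableAt.add
  · exact ((diff_L π i x).const_mul 2).mul (diff_P γ hx)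
  · exact ((((diff_pq π x).const_mul (2 * γ)).mul (diff_P (γ - 1) hx))).mul (diff_coord i x)

lemma diff_K0V (γ : ℝ) {x : HSp n} (hx : Rf x ≠ 0) : DifferentiableAt ℝ (K0V π γ) x :=
  (((diff_pq π x).const_mul (2 * γ)).mul (diff_P (γ - 1) hx)).mul (diff_s1 x)

lemma diff_K1H (γ : ℝ) (i : Fin n) {x : HSp n} (hx : Rf x ≠ 0) :
    DifferentiableAt ℝ (K1H π γ i) x := (diff_K0H π γ i hx).mul (diff_s1 x)

lemma diff_K1V (γ : ℝ) {x : HSp n} (hx : Rf x ≠ 0) : DifferentiableAt ℝ (K1V π γ) x :=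
  ((diff_K0V π γ hx).mul (diff_s1 x)).add (diff_K0 π γ hx)

lemma pdv_s1_eH (i : Fin n) (x : HSp n) : pdv (eH i) (fun p : HSp n => p.2 + 1) x = 0 := by
  rw [pdv, ((hasF_snd x).add_const 1).fderiv]; simp

lemma pdv_s1_eV (x : HSp n) : pdv eV (fun p : HSp n => p.2 + 1) x = 1 := by
  rw [pdv, ((hasF_snd x).add_const 1).fderiv]; simp

lemma pdv_K0_eH (hsym : ∀ i j, π i j = π j i) (γ : ℝ) (i : Fin n) {x : HSp n} (hx : Rf x ≠ 0) :
    pdv (eH i) (K0 π γ) x = K0H π γ i x := by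
  have : pdv (eH i) (fun y => pq π y * P γ y) x = K0H π γ i x := by
    rw [pdv_mul (eH i) (diff_pq π x) (diff_P γ hx), pdv_pq_eH π hsym i x, pdv_P_eH γ i hx]
    unfold K0H P; ring
  exact this

lemma pdv_K0_eV (γ : ℝ) {x : HSp n} (hx : Rf x ≠ 0) :
    pdv eV (K0 π γ) x = K0V π γ x := by
  have : pdv eV (fun y => pq π y * P γ y) x = K0V π γ x := by
    rw [pdv_mul eV (diff_pq π x) (diff_P γ hx), pdv_pq_eV π x, pdv_P_eV γ hx]
    unfold K0V P; ring
  exact this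

lemma pdv_K1_eH (hsym : ∀ i j, π i j = π j i) (γ : ℝ) (i : Fin n) {x : HSp n} (hx : Rf x ≠ 0) :
    pdv (eH i) (K1 π γ) x = K1H π γ i x := by
  have : pdv (eH i) (fun y => K0 π γ y * (y.2 + 1)) x = K1H π γ i x := by
    rw [pdv_mul (eH i) (diff_K0 π γ hx) (diff_s1 x), pdv_s1_eH i x,
      pdv_K0_eH π hsym γ i hx]
    unfold K1H; ring
  exact this

lemma pdv_K1_eV (γ : ℝ) {x : HSp n} (hx : Rf x ≠ 0) :
    pdv eV (K1 π γ) x = K1V π γ x := by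
  have : pdv eV (fun y => K0 π γ y * (y.2 + 1)) x = K1V π γ x := by
    rw [pdv_mul eV (diff_K0 π γ hx) (diff_s1 x), pdv_s1_eV x, pdv_K0_eV π γ hx]
    unfold K1V; ring
  exact this

/-- second derivative of `K0H` in the same horizontal direction -/
lemma pdv_K0H_eH (hsym : ∀ i j, π i j = π j i) (γ : ℝ) (i : Fin n) {x : HSp n} (hx : Rf x ≠ 0) :
    pdv (eH i) (K0H π γ i) x =
      2 * π i i * P γ x + 8 * γ * L π i x * P (γ - 1) x * x.1 i
        + 2 * γ * pq π x * P (γ - 1) x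
        + 4 * γ * (γ - 1) * pq π x * P (γ - 1 - 1) x * (x.1 i * x.1 i) := by
  have : pdv (eH i) (fun y => 2 * L π i y * P γ y
      + 2 * γ * pq π y * P (γ - 1) y * y.1 i) x = _ := rfl
  unfold K0H
  rw [pdv_add (eH i) (((diff_L π i x).const_mul 2).fun_mul (diff_P γ hx))
      ((((diff_pq π x).const_mul (2 * γ)).fun_mul (diff_P (γ - 1) hx)).fun_mul (diff_coord i x)),
    pdv_mul (eH i) ((diff_L π i x).const_mul 2) (diff_P γ hx),
    pdv_mul (eH i) (((diff_pq π x).const_mul (2 * γ)).fun_mul (diff_P (γ - 1) hx)) (diff_coord i x),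
    pdv_mul (eH i) ((diff_pq π x).const_mul (2 * γ)) (diff_P (γ - 1) hx),
    pdv_cmul (eH i) 2 (diff_L π i x), pdv_cmul (eH i) (2 * γ) (diff_pq π x),
    pdv_pq_eH π hsym i x, pdv_L_eH π i i x, pdv_P_eH γ i hx, pdv_P_eH (γ - 1) i hx,
    pdv_coord_eH i i x]
  unfold P
  ring_nf
  simp

/-- second vertical derivative of `K0V` -/
lemma pdv_K0V_eV (γ : ℝ) {x : HSp n} (hx : Rf x ≠ 0) :
    pdv eV (K0V π γ) x =
      2 * γ * pq π x * P (γ - 1) x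
        + 4 * γ * (γ - 1) * pq π x * P (γ - 1 - 1) x * ((x.2 + 1) * (x.2 + 1)) := by
  unfold K0V
  rw [pdv_mul eV (((diff_pq π x).const_mul (2 * γ)).fun_mul (diff_P (γ - 1) hx)) (diff_s1 x),
    pdv_mul eV ((diff_pq π x).const_mul (2 * γ)) (diff_P (γ - 1) hx),
    pdv_cmul eV (2 * γ) (diff_pq π x), pdv_pq_eV π x, pdv_P_eV (γ - 1) hx, pdv_s1_eV x]
  unfold P
  ring

lemma pdv_K1H_eH (hsym : ∀ i j, π i j = π j i) (γ : ℝ) (i : Fin n) {x : HSp n} (hx : Rf x ≠ 0) :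
    pdv (eH i) (K1H π γ i) x =
      (2 * π i i * P γ x + 8 * γ * L π i x * P (γ - 1) x * x.1 i
        + 2 * γ * pq π x * P (γ - 1) x
        + 4 * γ * (γ - 1) * pq π x * P (γ - 1 - 1) x * (x.1 i * x.1 i)) * (x.2 + 1) := by
  unfold K1H
  rw [pdv_mul (eH i) (diff_K0H π γ i hx) (diff_s1 x), pdv_s1_eH i x,
    pdv_K0H_eH π hsym γ i hx]
  ring

lemma pdv_K1V_eV (γ : ℝ) {x : HSp n} (hx : Rf x ≠ 0) :
    pdv eV (K1V π γ) x =
      (2 * γ * pq π x * P (γ - 1) x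
        + 4 * γ * (γ - 1) * pq π x * P (γ - 1 - 1) x * ((x.2 + 1) * (x.2 + 1))) * (x.2 + 1)
        + 2 * K0V π γ x := by
  unfold K1V
  rw [pdv_add eV ((diff_K0V π γ hx).fun_mul (diff_s1 x)) (diff_K0 π γ hx),
    pdv_mul eV (diff_K0V π γ hx) (diff_s1 x), pdv_s1_eV x, pdv_K0V_eV π γ hx,
    pdv_K0_eV π γ hx]
  unfold K0V P
  ring

end Xaux

namespace Xaux
variable {n : ℕ} (π : Fin n → Fin n → ℝ)

lemma sum_L_mul (x : HSp n) : ∑ i, L π i x * x.1 i = pq π x := by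
  unfold L pq
  rw [Finset.sum_congr rfl (fun i _ => Finset.sum_mul (Finset.univ) (fun j => π i j * x.1 j) (x.1 i))]
  apply Finset.sum_congr rfl
  intro i _
  apply Finset.sum_congr rfl
  intro j _
  ring

lemma sum_sq (x : HSp n) : ∑ i, x.1 i * x.1 i = Rf x - (x.2 + 1) * (x.2 + 1) := by
  unfold Rf; ring

lemma mem_Om {x : HSp n} (hx : 0 < Rf x) : x ∈ Om (n := n) := hx

lemma P_sub_one (γ : ℝ) {x : HSp n} (hne : Rf x ≠ 0) : P (γ - 1) x = P γ x / Rf x :=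
  Real.rpow_sub_one hne γ

lemma lap_K0 (hsym : ∀ i j, π i j = π j i) (htrace : ∑ i, π i i = 0) (γ : ℝ)
    {x : HSp n} (hx : 0 < Rf x) :
    lap (K0 π γ) x = γ * (2 * (n : ℝ) + 6 + 4 * γ) * pq π x * P γ x / Rf x := by
  have hne := ne_of_gt hx
  have hxo : x ∈ Om (n := n) := hx
  unfold lap
  rw [Finset.sum_congr rfl (fun i _ => by
    rw [pdv_congr_on isOpen_Om (fun y hy => pdv_K0_eH π hsym γ i (ne_of_gt hy)) hxo (eH i),
      pdv_K0H_eH π hsym γ i hne])]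
  rw [pdv_congr_on isOpen_Om (fun y hy => pdv_K0_eV π γ (ne_of_gt hy)) hxo eV,
    pdv_K0V_eV π γ hne]
  simp only [Finset.sum_add_distrib]
  have e1 : (∑ i, 2 * π i i * P γ x) = 0 := by
    rw [← Finset.sum_mul, ← Finset.mul_sum, htrace]; ring
  have e2 : (∑ i, 8 * γ * L π i x * P (γ - 1) x * x.1 i)
      = 8 * γ * P (γ - 1) x * pq π x := by
    rw [Finset.sum_congr rfl (fun i _ => by
      show 8 * γ * L π i x * P (γ - 1) x * x.1 i = 8 * γ * P (γ - 1) x * (L π i x * x.1 i)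
      ring), ← Finset.mul_sum, sum_L_mul]
  have e3 : (∑ _i : Fin n, 2 * γ * pq π x * P (γ - 1) x) = (n : ℝ) * (2 * γ * pq π x * P (γ - 1) x) := by
    rw [Finset.sum_const]
    simp [nsmul_eq_mul]
  have e4 : (∑ i, 4 * γ * (γ - 1) * pq π x * P (γ - 1 - 1) x * (x.1 i * x.1 i))
      = 4 * γ * (γ - 1) * pq π x * P (γ - 1 - 1) x * (Rf x - (x.2 + 1) * (x.2 + 1)) := by
    rw [← Finset.mul_sum, sum_sq]
  rw [e1, e2, e3, e4, P_sub_one γ hne, P_sub_one (γ - 1) hne, P_sub_one γ hne]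
  field_simp
  ring

lemma lap_K1 (hsym : ∀ i j, π i j = π j i) (htrace : ∑ i, π i i = 0) (γ : ℝ)
    {x : HSp n} (hx : 0 < Rf x) :
    lap (K1 π γ) x = γ * (2 * (n : ℝ) + 10 + 4 * γ) * pq π x * P γ x / Rf x * (x.2 + 1) := by
  have hne := ne_of_gt hx
  have hxo : x ∈ Om (n := n) := hx
  unfold lap
  rw [Finset.sum_congr rfl (fun i _ => by
    rw [pdv_congr_on isOpen_Om (fun y hy => pdv_K1_eH π hsym γ i (ne_of_gt hy)) hxo (eH i),
      pdv_K1H_eH π hsym γ i hne])]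
  rw [pdv_congr_on isOpen_Om (fun y hy => pdv_K1_eV π γ (ne_of_gt hy)) hxo eV,
    pdv_K1V_eV π γ hne]
  simp only [add_mul, Finset.sum_add_distrib]
  have e1 : (∑ i, 2 * π i i * P γ x * (x.2 + 1)) = 0 := by
    rw [← Finset.sum_mul, ← Finset.sum_mul, ← Finset.mul_sum, htrace]; ring
  have e2 : (∑ i, 8 * γ * L π i x * P (γ - 1) x * x.1 i * (x.2 + 1))
      = 8 * γ * P (γ - 1) x * (x.2 + 1) * pq π x := by
    rw [Finset.sum_congr rfl (fun i _ => by
      show 8 * γ * L π i x * P (γ - 1) x * x.1 i * (x.2 + 1)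
        = 8 * γ * P (γ - 1) x * (x.2 + 1) * (L π i x * x.1 i)
      ring), ← Finset.mul_sum, sum_L_mul]
  have e3 : (∑ _i : Fin n, 2 * γ * pq π x * P (γ - 1) x * (x.2 + 1))
      = (n : ℝ) * (2 * γ * pq π x * P (γ - 1) x * (x.2 + 1)) := by
    rw [Finset.sum_const]
    simp [nsmul_eq_mul]
  have e4 : (∑ i, 4 * γ * (γ - 1) * pq π x * P (γ - 1 - 1) x * (x.1 i * x.1 i) * (x.2 + 1))
      = 4 * γ * (γ - 1) * pq π x * P (γ - 1 - 1) x * (x.2 + 1) * (Rf x - (x.2 + 1) * (x.2 + 1)) := by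
    rw [Finset.sum_congr rfl (fun i _ => by
      show 4 * γ * (γ - 1) * pq π x * P (γ - 1 - 1) x * (x.1 i * x.1 i) * (x.2 + 1)
        = 4 * γ * (γ - 1) * pq π x * P (γ - 1 - 1) x * (x.2 + 1) * (x.1 i * x.1 i)
      ring), ← Finset.mul_sum, sum_sq]
  rw [e1, e2, e3, e4, P_sub_one γ hne, P_sub_one (γ - 1) hne, P_sub_one γ hne]
  unfold K0V
  rw [P_sub_one γ hne]
  field_simp
  ring

end Xaux

namespace Xaux
variable {n : ℕ} (π : Fin n → Fin n → ℝ)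

/-! ### cross second derivatives of powers (for the bubble) -/

def PH (γ : ℝ) (j : Fin n) (x : HSp n) : ℝ := 2 * γ * P (γ - 1) x * x.1 j

lemma pdv_P_eH' (γ : ℝ) (j : Fin n) {x : HSp n} (hx : Rf x ≠ 0) :
    pdv (eH j) (P (n := n) γ) x = PH γ j x := by
  rw [pdv_P_eH γ j hx]; unfold PH P; ring

lemma diff_PH (γ : ℝ) (j : Fin n) {x : HSp n} (hx : Rf x ≠ 0) :
    DifferentiableAt ℝ (PH γ j) x :=
  ((diff_P (γ - 1) hx).const_mul (2 * γ)).mul (diff_coord j x)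

lemma pdv_PH_eH (γ : ℝ) (i j : Fin n) {x : HSp n} (hx : Rf x ≠ 0) :
    pdv (eH i) (PH γ j) x =
      4 * γ * (γ - 1) * P (γ - 1 - 1) x * x.1 i * x.1 j
        + 2 * γ * P (γ - 1) x * (if j = i then 1 else 0) := by
  unfold PH
  rw [pdv_mul (eH i) ((diff_P (γ - 1) hx).const_mul (2 * γ)) (diff_coord j x),
    pdv_cmul (eH i) (2 * γ) (diff_P (γ - 1) hx), pdv_coord_eH i j x, pdv_P_eH (γ - 1) i hx]
  unfold P
  ring

lemma contract_P (htrace : ∑ i, π i i = 0) (γ : ℝ) {x : HSp n} (hx : 0 < Rf x) :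
    ∑ i, ∑ j, π i j * pdv (eH i) (pdv (eH j) (P (n := n) γ)) x
      = 4 * γ * (γ - 1) * P (γ - 1 - 1) x * pq π x := by
  have hne := ne_of_gt hx
  have hxo : x ∈ Om (n := n) := hx
  have h2 : ∀ i j : Fin n, pdv (eH i) (pdv (eH j) (P (n := n) γ)) x =
      4 * γ * (γ - 1) * P (γ - 1 - 1) x * x.1 i * x.1 j
        + 2 * γ * P (γ - 1) x * (if j = i then 1 else 0) := fun i j => by
    rw [pdv_congr_on isOpen_Om (fun y hy => pdv_P_eH' γ j (ne_of_gt hy)) hxo (eH i),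
      pdv_PH_eH γ i j hne]
  rw [Finset.sum_congr rfl (fun i _ => Finset.sum_congr rfl (fun j _ => by rw [h2 i j]))]
  have key : ∀ i : Fin n, ∑ j : Fin n, π i j *
      (4 * γ * (γ - 1) * P (γ - 1 - 1) x * x.1 i * x.1 j
        + 2 * γ * P (γ - 1) x * (if j = i then 1 else 0))
      = (∑ j, 4 * γ * (γ - 1) * P (γ - 1 - 1) x * (π i j * x.1 i * x.1 j))
        + 2 * γ * P (γ - 1) x * π i i := by
    intro i
    rw [Finset.sum_congr rfl (fun j _ => mul_add (π i j) _ _), Finset.sum_add_distrib]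
    congr 1
    · exact Finset.sum_congr rfl (fun j _ => by ring)
    · rw [Finset.sum_congr rfl (fun j _ => by
        show π i j * (2 * γ * P (γ - 1) x * (if j = i then 1 else 0))
          = if j = i then 2 * γ * P (γ - 1) x * π i j else 0
        split <;> ring), Finset.sum_ite_eq' Finset.univ i]
      simp
  rw [Finset.sum_congr rfl (fun i _ => key i), Finset.sum_add_distrib]
  have t1 : (∑ i : Fin n, 2 * γ * P (γ - 1) x * π i i) = 0 := by
    rw [← Finset.mul_sum, htrace, mul_zero]
  rw [t1, add_zero, Finset.sum_congr rfl
    (fun i _ => (Finset.mul_sum Finset.univ (fun j => π i j * x.1 i * x.1 j)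
        (4 * γ * (γ - 1) * P (γ - 1 - 1) x)).symm)]
  rw [← Finset.mul_sum]
  rfl

end Xaux

namespace Xaux
variable {n : ℕ} (π : Fin n → Fin n → ℝ)

/-! ### C² glue -/

def C2At (f : HSp n → ℝ) (U : Set (HSp n)) (x : HSp n) : Prop :=
  (∀ y ∈ U, DifferentiableAt ℝ f y) ∧ (∀ i, DifferentiableAt ℝ (pdv (eH i) f) x)
    ∧ DifferentiableAt ℝ (pdv eV f) x

lemma pdv_sub {f g : HSp n → ℝ} {x : HSp n} (v : HSp n)
    (hf : DifferentiableAt ℝ f x) (hg : DifferentiableAt ℝ g x) :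
    pdv v (fun y => f y - g y) x = pdv v f x - pdv v g x := by
  rw [pdv, fderiv_fun_sub hf hg]; rfl

lemma lap_congr_on {U : Set (HSp n)} (hU : IsOpen U) {f g : HSp n → ℝ}
    (h : ∀ y ∈ U, f y = g y) {x : HSp n} (hx : x ∈ U) : lap f x = lap g x := by
  unfold lap
  rw [Finset.sum_congr rfl (fun i _ =>
    pdv_congr_on hU (fun y hy => pdv_congr_on hU h hy (eH i)) hx (eH i)),
    pdv_congr_on hU (fun y hy => pdv_congr_on hU h hy eV) hx eV]

lemma lap_add_at {U : Set (HSp n)} (hU : IsOpen U) {x : HSp n} (hx : x ∈ U) {f g : HSp n → ℝ}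
    (hf : C2At f U x) (hg : C2At g U x) :
    lap (fun y => f y + g y) x = lap f x + lap g x := by
  have hp : ∀ v : HSp n, ∀ y ∈ U, pdv v (fun z => f z + g z) y = pdv v f y + pdv v g y :=
    fun v y hy => pdv_add v (hf.1 y hy) (hg.1 y hy)
  unfold lap
  rw [Finset.sum_congr rfl (fun i _ => by
      rw [pdv_congr_on hU (hp (eH i)) hx (eH i), pdv_add (eH i) (hf.2.1 i) (hg.2.1 i)]),
    pdv_congr_on hU (hp eV) hx eV, pdv_add eV (hf.2.2) (hg.2.2), Finset.sum_add_distrib]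
  ring

lemma lap_sub_at {U : Set (HSp n)} (hU : IsOpen U) {x : HSp n} (hx : x ∈ U) {f g : HSp n → ℝ}
    (hf : C2At f U x) (hg : C2At g U x) :
    lap (fun y => f y - g y) x = lap f x - lap g x := by
  have hp : ∀ v : HSp n, ∀ y ∈ U, pdv v (fun z => f z - g z) y = pdv v f y - pdv v g y :=
    fun v y hy => pdv_sub v (hf.1 y hy) (hg.1 y hy)
  unfold lap
  rw [Finset.sum_congr rfl (fun i _ => by
      rw [pdv_congr_on hU (hp (eH i)) hx (eH i), pdv_sub (eH i) (hf.2.1 i) (hg.2.1 i)]),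
    pdv_congr_on hU (hp eV) hx eV, pdv_sub eV (hf.2.2) (hg.2.2), Finset.sum_sub_distrib]
  ring

lemma lap_cmul_at {U : Set (HSp n)} (hU : IsOpen U) {x : HSp n} (hx : x ∈ U) (c : ℝ)
    {f : HSp n → ℝ} (hf : C2At f U x) :
    lap (fun y => c * f y) x = c * lap f x := by
  have hp : ∀ v : HSp n, ∀ y ∈ U, pdv v (fun z => c * f z) y = c * pdv v f y :=
    fun v y hy => pdv_cmul v c (hf.1 y hy)
  unfold lap
  rw [Finset.sum_congr rfl (fun i _ => by
      rw [pdv_congr_on hU (hp (eH i)) hx (eH i), pdv_cmul (eH i) c (hf.2.1 i)]),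
    pdv_congr_on hU (hp eV) hx eV, pdv_cmul eV c (hf.2.2), ← Finset.mul_sum]
  ring

lemma C2At.add {U : Set (HSp n)} (hU : IsOpen U) {x : HSp n} (hx : x ∈ U) {f g : HSp n → ℝ}
    (hf : C2At f U x) (hg : C2At g U x) : C2At (fun y => f y + g y) U x := by
  refine ⟨fun y hy => (hf.1 y hy).add (hg.1 y hy), fun i => ?_, ?_⟩
  · exact diffAt_congr_on hU (fun y hy => pdv_add (eH i) (hf.1 y hy) (hg.1 y hy)) hx
      ((hf.2.1 i).add (hg.2.1 i))
  · exact diffAt_congr_on hU (fun y hy => pdv_add eV (hf.1 y hy) (hg.1 y hy)) hx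
      ((hf.2.2).add (hg.2.2))

lemma C2At.cmul {U : Set (HSp n)} (hU : IsOpen U) {x : HSp n} (hx : x ∈ U) (c : ℝ)
    {f : HSp n → ℝ} (hf : C2At f U x) : C2At (fun y => c * f y) U x := by
  refine ⟨fun y hy => (hf.1 y hy).const_mul c, fun i => ?_, ?_⟩
  · exact diffAt_congr_on hU (fun y hy => pdv_cmul (eH i) c (hf.1 y hy)) hx
      ((hf.2.1 i).const_mul c)
  · exact diffAt_congr_on hU (fun y hy => pdv_cmul eV c (hf.1 y hy)) hx ((hf.2.2).const_mul c)

lemma C2At_K0 (hsym : ∀ i j, π i j = π j i) (γ : ℝ) {x : HSp n} (hx : x ∈ Om (n := n)) :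
    C2At (K0 π γ) (Om (n := n)) x := by
  refine ⟨fun y hy => diff_K0 π γ (ne_of_gt hy), fun i => ?_, ?_⟩
  · exact diffAt_congr_on isOpen_Om (fun y hy => pdv_K0_eH π hsym γ i (ne_of_gt hy)) hx
      (diff_K0H π γ i (ne_of_gt hx))
  · exact diffAt_congr_on isOpen_Om (fun y hy => pdv_K0_eV π γ (ne_of_gt hy)) hx
      (diff_K0V π γ (ne_of_gt hx))

lemma C2At_K1 (hsym : ∀ i j, π i j = π j i) (γ : ℝ) {x : HSp n} (hx : x ∈ Om (n := n)) :
    C2At (K1 π γ) (Om (n := n)) x := by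
  refine ⟨fun y hy => diff_K1 π γ (ne_of_gt hy), fun i => ?_, ?_⟩
  · exact diffAt_congr_on isOpen_Om (fun y hy => pdv_K1_eH π hsym γ i (ne_of_gt hy)) hx
      (diff_K1H π γ i (ne_of_gt hx))
  · exact diffAt_congr_on isOpen_Om (fun y hy => pdv_K1_eV π γ (ne_of_gt hy)) hx
      (diff_K1V π γ (ne_of_gt hx))

end Xaux

namespace Xaux
variable {n : ℕ} (π : Fin n → Fin n → ℝ)

/-! ### the correction function -/

def Phic (c ε a₁ a₂ : ℝ) (x : HSp n) : ℝ :=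
  (ε * ((c - 2) / 2)) * K1 π (-(c/2)) x + (-(ε * (c - 2))) * K0 π (-(c/2)) x
    + (ε * a₁) * K1 π (-(c/2) - 2) x + (ε * a₂) * K0 π (-(c/2) - 1) x

def PhicV (c ε a₁ a₂ : ℝ) (x : HSp n) : ℝ :=
  (ε * ((c - 2) / 2)) * K1V π (-(c/2)) x + (-(ε * (c - 2))) * K0V π (-(c/2)) x
    + (ε * a₁) * K1V π (-(c/2) - 2) x + (ε * a₂) * K0V π (-(c/2) - 1) x

lemma C2At_Phic (hsym : ∀ i j, π i j = π j i) (c ε a₁ a₂ : ℝ) {x : HSp n}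
    (hx : x ∈ Om (n := n)) : C2At (Phic π c ε a₁ a₂) (Om (n := n)) x := by
  have h1 : C2At (fun y => (ε * ((c - 2) / 2)) * K1 π (-(c/2)) y) (Om (n := n)) x :=
    C2At.cmul isOpen_Om hx _ (C2At_K1 π hsym _ hx)
  have h2 : C2At (fun y => (-(ε * (c - 2))) * K0 π (-(c/2)) y) (Om (n := n)) x :=
    C2At.cmul isOpen_Om hx _ (C2At_K0 π hsym _ hx)
  have h3 : C2At (fun y => (ε * a₁) * K1 π (-(c/2) - 2) y) (Om (n := n)) x :=
    C2At.cmul isOpen_Om hx _ (C2At_K1 π hsym _ hx)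
  have h4 : C2At (fun y => (ε * a₂) * K0 π (-(c/2) - 1) y) (Om (n := n)) x :=
    C2At.cmul isOpen_Om hx _ (C2At_K0 π hsym _ hx)
  exact C2At.add isOpen_Om hx (C2At.add isOpen_Om hx (C2At.add isOpen_Om hx h1 h2) h3) h4

lemma lap_Phic (hsym : ∀ i j, π i j = π j i) (htrace : ∑ i, π i i = 0)
    {c : ℝ} (hc : c = (n : ℝ) + 1) (ε a₁ a₂ : ℝ) {x : HSp n} (hx : 0 < Rf x) :
    lap (Phic π c ε a₁ a₂) x
      = -(2 * c * (c - 2) * ε) * pq π x * x.2 * P (-(c/2)) x / Rf x := by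
  have hne := ne_of_gt hx
  have hxo : x ∈ Om (n := n) := hx
  have h1 : C2At (fun y => (ε * ((c - 2) / 2)) * K1 π (-(c/2)) y) (Om (n := n)) x :=
    C2At.cmul isOpen_Om hxo _ (C2At_K1 π hsym _ hxo)
  have h2 : C2At (fun y => (-(ε * (c - 2))) * K0 π (-(c/2)) y) (Om (n := n)) x :=
    C2At.cmul isOpen_Om hxo _ (C2At_K0 π hsym _ hxo)
  have h3 : C2At (fun y => (ε * a₁) * K1 π (-(c/2) - 2) y) (Om (n := n)) x :=
    C2At.cmul isOpen_Om hxo _ (C2At_K1 π hsym _ hxo)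
  have h12 : C2At (fun y => (ε * ((c - 2) / 2)) * K1 π (-(c/2)) y
      + (-(ε * (c - 2))) * K0 π (-(c/2)) y) (Om (n := n)) x :=
    C2At.add isOpen_Om hxo h1 h2
  have h123 : C2At (fun y => ((ε * ((c - 2) / 2)) * K1 π (-(c/2)) y
      + (-(ε * (c - 2))) * K0 π (-(c/2)) y) + (ε * a₁) * K1 π (-(c/2) - 2) y)
      (Om (n := n)) x := C2At.add isOpen_Om hxo h12 h3
  have h4 : C2At (fun y => (ε * a₂) * K0 π (-(c/2) - 1) y) (Om (n := n)) x :=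
    C2At.cmul isOpen_Om hxo _ (C2At_K0 π hsym _ hxo)
  have step1 : lap (Phic π c ε a₁ a₂) x
      = lap (fun y => ((ε * ((c - 2) / 2)) * K1 π (-(c/2)) y
          + (-(ε * (c - 2))) * K0 π (-(c/2)) y) + (ε * a₁) * K1 π (-(c/2) - 2) y) x
        + lap (fun y => (ε * a₂) * K0 π (-(c/2) - 1) y) x :=
    lap_add_at isOpen_Om hxo h123 h4
  have step2 : lap (fun y => ((ε * ((c - 2) / 2)) * K1 π (-(c/2)) y
      + (-(ε * (c - 2))) * K0 π (-(c/2)) y) + (ε * a₁) * K1 π (-(c/2) - 2) y) x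
      = lap (fun y => (ε * ((c - 2) / 2)) * K1 π (-(c/2)) y
          + (-(ε * (c - 2))) * K0 π (-(c/2)) y) x
        + lap (fun y => (ε * a₁) * K1 π (-(c/2) - 2) y) x :=
    lap_add_at isOpen_Om hxo h12 h3
  have step3 : lap (fun y => (ε * ((c - 2) / 2)) * K1 π (-(c/2)) y
      + (-(ε * (c - 2))) * K0 π (-(c/2)) y) x
      = lap (fun y => (ε * ((c - 2) / 2)) * K1 π (-(c/2)) y) x
        + lap (fun y => (-(ε * (c - 2))) * K0 π (-(c/2)) y) x :=
    lap_add_at isOpen_Om hxo h1 h2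
  have c1 : lap (fun y => (ε * ((c - 2) / 2)) * K1 π (-(c/2)) y) x
      = (ε * ((c - 2) / 2)) * lap (K1 π (-(c/2))) x :=
    lap_cmul_at isOpen_Om hxo _ (C2At_K1 π hsym _ hxo)
  have c2 : lap (fun y => (-(ε * (c - 2))) * K0 π (-(c/2)) y) x
      = (-(ε * (c - 2))) * lap (K0 π (-(c/2))) x :=
    lap_cmul_at isOpen_Om hxo _ (C2At_K0 π hsym _ hxo)
  have c3 : lap (fun y => (ε * a₁) * K1 π (-(c/2) - 2) y) x
      = (ε * a₁) * lap (K1 π (-(c/2) - 2)) x :=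
    lap_cmul_at isOpen_Om hxo _ (C2At_K1 π hsym _ hxo)
  have c4 : lap (fun y => (ε * a₂) * K0 π (-(c/2) - 1) y) x
      = (ε * a₂) * lap (K0 π (-(c/2) - 1)) x :=
    lap_cmul_at isOpen_Om hxo _ (C2At_K0 π hsym _ hxo)
  rw [step1, step2, step3, c1, c2, c3, c4,
    lap_K0 π hsym htrace _ hx, lap_K0 π hsym htrace _ hx,
    lap_K1 π hsym htrace _ hx, lap_K1 π hsym htrace _ hx]
  have hP2 : P (-(c/2) - 2) x = P (-(c/2)) x / Rf x / Rf x := by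
    have : (-(c/2) - 2 : ℝ) = (-(c/2) - 1) - 1 := by ring
    rw [this, P_sub_one _ hne, P_sub_one _ hne]
  have hP1 : P (-(c/2) - 1) x = P (-(c/2)) x / Rf x := P_sub_one _ hne
  rw [hP2, hP1, hc]
  field_simp
  ring

/-- vertical derivative of `Phic` -/
lemma pdv_Phic_eV (hsym : ∀ i j, π i j = π j i) (c ε a₁ a₂ : ℝ) {x : HSp n}
    (hx : Rf x ≠ 0) :
    pdv eV (Phic π c ε a₁ a₂) x = PhicV π c ε a₁ a₂ x := by
  have d1 : DifferentiableAt ℝ (fun y => (ε * ((c - 2) / 2)) * K1 π (-(c/2)) y) x :=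
    (diff_K1 π _ hx).const_mul _
  have d2 : DifferentiableAt ℝ (fun y => (-(ε * (c - 2))) * K0 π (-(c/2)) y) x :=
    (diff_K0 π _ hx).const_mul _
  have d3 : DifferentiableAt ℝ (fun y => (ε * a₁) * K1 π (-(c/2) - 2) y) x :=
    (diff_K1 π _ hx).const_mul _
  have d4 : DifferentiableAt ℝ (fun y => (ε * a₂) * K0 π (-(c/2) - 1) y) x :=
    (diff_K0 π _ hx).const_mul _
  have step1 : pdv eV (Phic π c ε a₁ a₂) x
      = pdv eV (fun y => ((ε * ((c - 2) / 2)) * K1 π (-(c/2)) y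
          + (-(ε * (c - 2))) * K0 π (-(c/2)) y) + (ε * a₁) * K1 π (-(c/2) - 2) y) x
        + pdv eV (fun y => (ε * a₂) * K0 π (-(c/2) - 1) y) x :=
    pdv_add eV ((d1.add d2).add d3) d4
  have step2 : pdv eV (fun y => ((ε * ((c - 2) / 2)) * K1 π (-(c/2)) y
      + (-(ε * (c - 2))) * K0 π (-(c/2)) y) + (ε * a₁) * K1 π (-(c/2) - 2) y) x
      = pdv eV (fun y => (ε * ((c - 2) / 2)) * K1 π (-(c/2)) y
          + (-(ε * (c - 2))) * K0 π (-(c/2)) y) x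
        + pdv eV (fun y => (ε * a₁) * K1 π (-(c/2) - 2) y) x :=
    pdv_add eV (d1.add d2) d3
  have step3 : pdv eV (fun y => (ε * ((c - 2) / 2)) * K1 π (-(c/2)) y
      + (-(ε * (c - 2))) * K0 π (-(c/2)) y) x
      = pdv eV (fun y => (ε * ((c - 2) / 2)) * K1 π (-(c/2)) y) x
        + pdv eV (fun y => (-(ε * (c - 2))) * K0 π (-(c/2)) y) x :=
    pdv_add eV d1 d2
  rw [step1, step2, step3,
    pdv_cmul eV _ (diff_K1 π _ hx), pdv_cmul eV _ (diff_K0 π _ hx),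
    pdv_cmul eV _ (diff_K1 π _ hx), pdv_cmul eV _ (diff_K0 π _ hx),
    pdv_K1_eV π _ hx, pdv_K0_eV π _ hx, pdv_K1_eV π _ hx, pdv_K0_eV π _ hx]
  rfl

lemma diff_PhicV (c ε a₁ a₂ : ℝ) {x : HSp n} (hx : Rf x ≠ 0) :
    DifferentiableAt ℝ (PhicV π c ε a₁ a₂) x := by
  apply DifferentiableAt.add
  apply DifferentiableAt.add
  apply DifferentiableAt.add
  · exact (diff_K1V π _ hx).const_mul _
  · exact (diff_K0V π _ hx).const_mul _
  · exact (diff_K1V π _ hx).const_mul _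
  · exact (diff_K0V π _ hx).const_mul _

end Xaux


set_option maxHeartbeats 2000000 in
open Xaux in
/-- `Ξ = Ψ - Φ` is harmonic in the upper half-space and satisfies
`-lim_{x_N→0} ∂Ξ/∂x_N = N w_{1,0}^{2/(N-2)} Ξ + q` on the boundary. -/
theorem Xi_harmonic_with_boundary_term (N : ℕ) (hN : 4 ≤ N) (ε : ℝ) (hε : 0 < ε)
    (π : Fin (N - 1) → Fin (N - 1) → ℝ)
    (hsym : ∀ i j, π i j = π j i) (htrace : ∑ i, π i i = 0)
    (a₁ a₂ : ℝ) (Ψ Φ Ξ : HSp (N - 1) → ℝ)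
    (hΨsmooth : ContDiffOn ℝ (⊤ : ℕ∞) Ψ {p : HSp (N - 1) | 0 ≤ p.2})
    (hΨeq : ∀ x ∈ upperHalf (N - 1), -(lap Ψ x) =
      2 * ε * x.2 * ∑ i, ∑ j, π i j * pdv (eH i) (pdv (eH j) (Bub N 1 0)) x)
    (hΨbc : ∀ y : EuclideanSpace ℝ (Fin (N - 1)),
      Tendsto (fun t : ℝ => pdv eV Ψ (y, t)) (𝓝[>] (0 : ℝ))
        (𝓝 (-((N : ℝ) * bub N 1 0 y ^ ((2 : ℝ) / ((N : ℝ) - 2)) * Ψ (y, 0)))))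
    (hΦ : ∀ x : HSp (N - 1), Φ x =
      ε * (∑ i, ∑ j, π i j * x.1 i * x.1 j) /
          (‖x.1‖ ^ 2 + (x.2 + 1) ^ 2) ^ ((N : ℝ) / 2) *
        (((N : ℝ) - 2) / 2 * (x.2 - 1)
          + a₁ * (x.2 + 1) / (‖x.1‖ ^ 2 + (x.2 + 1) ^ 2) ^ 2
          + a₂ / (‖x.1‖ ^ 2 + (x.2 + 1) ^ 2)))
    (hΞ : ∀ x, Ξ x = Ψ x - Φ x)
    (q : EuclideanSpace ℝ (Fin (N - 1)) → ℝ)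
    (hq : ∀ y : EuclideanSpace ℝ (Fin (N - 1)), q y =
      ε * (∑ i, ∑ j, π i j * y i * y j) / (‖y‖ ^ 2 + 1) ^ ((N : ℝ) / 2) *
        (((N : ℝ) - 2) / 2
          + a₁ * (1 / (‖y‖ ^ 2 + 1) ^ 2 - 4 / (‖y‖ ^ 2 + 1) ^ 3)
          - 2 * a₂ / (‖y‖ ^ 2 + 1) ^ 2)) :
    (∀ x ∈ upperHalf (N - 1), lap Ξ x = 0) ∧
    (∀ y : EuclideanSpace ℝ (Fin (N - 1)),
      Tendsto (fun t : ℝ => pdv eV Ξ (y, t)) (𝓝[>] (0 : ℝ))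
        (𝓝 (-((N : ℝ) * bub N 1 0 y ^ ((2 : ℝ) / ((N : ℝ) - 2)) * Ξ (y, 0) + q y)))) := by
  have hc4 : (4:ℝ) ≤ (N:ℝ) := by exact_mod_cast hN
  have hc2 : (N:ℝ) - 2 ≠ 0 := by linarith
  have hn1 : ((N - 1 : ℕ) : ℝ) = (N:ℝ) - 1 := by
    rw [Nat.cast_sub (by omega)]; norm_num
  have hcn : (N:ℝ) = ((N - 1 : ℕ):ℝ) + 1 := by rw [hn1]; ring
  have nsq : ∀ z : EuclideanSpace ℝ (Fin (N-1)), ‖z‖^2 = ∑ i, z i * z i := by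
    intro z
    rw [EuclideanSpace.norm_eq, Real.sq_sqrt (Finset.sum_nonneg fun i _ => sq_nonneg _)]
    exact Finset.sum_congr rfl fun i _ => by rw [Real.norm_eq_abs, sq_abs, sq]
  have hRf : ∀ x : HSp (N-1), (‖x.1‖^2 + (x.2+1)^2 : ℝ) = Rf x := by
    intro x; rw [nsq x.1]; unfold Rf; ring
  have hOm : ∀ x : HSp (N-1), 0 ≤ x.2 → 0 < Rf x := by
    intro x hx2
    have h1 : 0 ≤ ∑ i, x.1 i * x.1 i := Finset.sum_nonneg fun i _ => mul_self_nonneg _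
    unfold Rf
    nlinarith
  -- Φ agrees with the model combination on Om
  have hΦc : ∀ x : HSp (N-1), 0 < Rf x → Φ x = Phic π (N:ℝ) ε a₁ a₂ x := by
    intro x hx
    have h0 : Rf x ≠ 0 := ne_of_gt hx
    have hP0 : (0:ℝ) < Rf x ^ ((N:ℝ)/2) := Real.rpow_pos_of_pos hx _
    rw [hΦ x, hRf x]
    unfold Phic K1 K0 P pq
    have eA : Rf x ^ (-((N:ℝ)/2)) = (Rf x ^ ((N:ℝ)/2))⁻¹ := Real.rpow_neg hx.le _
    have e1 : Rf x ^ (-((N:ℝ)/2) - 1) = Rf x ^ (-((N:ℝ)/2)) / Rf x :=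
      Real.rpow_sub_one h0 _
    have e2 : Rf x ^ (-((N:ℝ)/2) - 2) = Rf x ^ (-((N:ℝ)/2)) / Rf x / Rf x := by
      rw [show (-((N:ℝ)/2) - 2 : ℝ) = -((N:ℝ)/2) - 1 - 1 by ring, Real.rpow_sub_one h0,
        Real.rpow_sub_one h0]
    rw [e1, e2, eA]
    field_simp
    ring
  -- the bubble is a power of Rf on Om
  have hB : ∀ y ∈ Om (n := N - 1), Bub N 1 0 y = P (-(((N:ℝ)-2)/2)) y := by
    intro y hy
    have hy' : (0:ℝ) < Rf y := hy
    unfold Bub P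
    rw [Real.one_rpow, sub_zero, hRf y, Real.rpow_neg hy'.le, one_div]
  have hΨat : ∀ y : HSp (N-1), 0 < y.2 → ContDiffAt ℝ (⊤ : ℕ∞) Ψ y := by
    intro y hy
    apply hΨsmooth.contDiffAt
    exact Filter.mem_of_superset
      ((isOpen_lt continuous_const continuous_snd).mem_nhds hy)
      (fun z hz => le_of_lt (show (0:ℝ) < z.2 from hz))
  have hΨdiff : ∀ y : HSp (N-1), 0 < y.2 → DifferentiableAt ℝ Ψ y :=
    fun y hy => (hΨat y hy).differentiableAt (by simp)
  constructor
  · -- harmonicity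
    intro x hx
    have hx2 : (0:ℝ) < x.2 := hx
    have hxOm : 0 < Rf x := hOm x hx2.le
    have hxOm' : x ∈ Om (n := N - 1) := hxOm
    set U : Set (HSp (N-1)) := {p : HSp (N-1) | 0 < p.2} ∩ Om with hUdef
    have hUopen : IsOpen U := (isOpen_lt continuous_const continuous_snd).inter isOpen_Om
    have hxU : x ∈ U := ⟨hx2, hxOm⟩
    have hΨpdvdiff : ∀ v : HSp (N-1), DifferentiableAt ℝ (pdv v Ψ) x := by
      intro v
      have hfd : ContDiffAt ℝ (⊤ : ℕ∞) (fderiv ℝ Ψ) x := (hΨat x hx2).fderiv_right (by simp)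
      have : DifferentiableAt ℝ (fun y => (fderiv ℝ Ψ y) v) x :=
        (hfd.differentiableAt (by simp)).clm_apply (differentiableAt_const v)
      exact this
    have hΨC2 : C2At Ψ U x := ⟨fun y hy => hΨdiff y hy.1, fun i => hΨpdvdiff (eH i), hΨpdvdiff eV⟩
    have hΦC2' := C2At_Phic π hsym (N:ℝ) ε a₁ a₂ hxOm'
    have hΦC2 : C2At (Phic π (N:ℝ) ε a₁ a₂) U x :=
      ⟨fun y hy => hΦC2'.1 y hy.2, hΦC2'.2.1, hΦC2'.2.2⟩
    have h1 : lap Ξ x = lap Ψ x - lap (Phic π (N:ℝ) ε a₁ a₂) x := by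
      rw [lap_congr_on hUopen
        (f := Ξ) (g := fun y => Ψ y - Phic π (N:ℝ) ε a₁ a₂ y)
        (fun y hy => by rw [hΞ y, hΦc y hy.2]) hxU]
      exact lap_sub_at hUopen hxU hΨC2 hΦC2
    -- compute lap Ψ from the equation
    have hsum2 : (∑ i, ∑ j, π i j * pdv (eH i) (pdv (eH j) (Bub N 1 0)) x)
        = 4 * (-(((N:ℝ)-2)/2)) * ((-(((N:ℝ)-2)/2)) - 1) * (P (-((N:ℝ)/2)) x / Rf x) * pq π x := by
      rw [Finset.sum_congr rfl (fun i _ => Finset.sum_congr rfl (fun j _ => by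
        rw [pdv_congr_on isOpen_Om
          (fun z hz => pdv_congr_on isOpen_Om hB hz (eH j)) hxOm' (eH i)]))]
      rw [contract_P π htrace _ hxOm]
      have hexp : P (-(((N:ℝ)-2)/2) - 1 - 1) x = P (-((N:ℝ)/2)) x / Rf x := by
        rw [show (-(((N:ℝ)-2)/2) - 1 - 1 : ℝ) = (-((N:ℝ)/2)) - 1 by ring]
        exact P_sub_one _ (ne_of_gt hxOm)
      rw [hexp]
    have heq := hΨeq x hx
    rw [hsum2] at heq
    have hlapΨ : lap Ψ x = -(2 * ε * x.2 *
        (4 * (-(((N:ℝ)-2)/2)) * ((-(((N:ℝ)-2)/2)) - 1) * (P (-((N:ℝ)/2)) x / Rf x) * pq π x)) := by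
      linarith
    rw [h1, hlapΨ, lap_Phic π hsym htrace hcn ε a₁ a₂ hxOm]
    field_simp
    ring
  · -- boundary condition
    intro y
    have hR0 : 0 < Rf ((y, 0) : HSp (N-1)) := hOm _ (le_refl 0)
    have h0 : Rf ((y, 0) : HSp (N-1)) ≠ 0 := ne_of_gt hR0
    have hRy : (‖y‖^2 + 1 : ℝ) = Rf ((y, 0) : HSp (N-1)) := by
      have := hRf ((y, 0) : HSp (N-1))
      norm_num at this
      exact this
    have hev : ∀ᶠ t in 𝓝[>] (0:ℝ), pdv eV Ξ (y, t)
        = pdv eV Ψ (y, t) - PhicV π (N:ℝ) ε a₁ a₂ (y, t) := by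
      filter_upwards [self_mem_nhdsWithin] with t ht
      have ht' : (0:ℝ) < t := ht
      have hOmt : 0 < Rf ((y, t) : HSp (N-1)) := hOm _ (le_of_lt ht')
      have hd1 : DifferentiableAt ℝ Ψ (y, t) := hΨdiff _ ht'
      have hd2 : DifferentiableAt ℝ Φ (y, t) :=
        diffAt_congr_on isOpen_Om (fun z hz => hΦc z hz) hOmt
          ((C2At_Phic π hsym (N:ℝ) ε a₁ a₂ hOmt).1 _ hOmt)
      have hXi : pdv eV Ξ (y,t) = pdv eV (fun z => Ψ z - Φ z) (y,t) := by
        rw [show Ξ = fun z => Ψ z - Φ z from funext hΞ]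
      rw [hXi, pdv_sub eV hd1 hd2]
      congr 1
      rw [pdv_congr_on isOpen_Om (fun z hz => hΦc z hz) hOmt eV,
        pdv_Phic_eV π hsym (N:ℝ) ε a₁ a₂ (ne_of_gt hOmt)]
    have hlim2 : Tendsto (fun t : ℝ => PhicV π (N:ℝ) ε a₁ a₂ (y, t)) (𝓝[>] (0:ℝ))
        (𝓝 (PhicV π (N:ℝ) ε a₁ a₂ ((y, 0) : HSp (N-1)))) := by
      have hcont : ContinuousAt (PhicV π (N:ℝ) ε a₁ a₂) ((y, 0) : HSp (N-1)) :=
        (diff_PhicV π _ _ _ _ h0).continuousAt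
      have hcurve : Tendsto (fun t : ℝ => ((y, t) : HSp (N-1))) (𝓝[>] (0:ℝ))
          (𝓝 ((y, 0) : HSp (N-1))) := by
        have hcc : Continuous (fun t : ℝ => ((y, t) : HSp (N-1))) :=
          continuous_const.prodMk continuous_id
        exact (hcc.tendsto 0).mono_left nhdsWithin_le_nhds
      exact hcont.tendsto.comp hcurve
    have hcomb := (hΨbc y).sub hlim2
    have hw : bub N 1 0 y ^ ((2:ℝ)/((N:ℝ)-2)) = (Rf ((y, 0) : HSp (N-1)))⁻¹ := by
      unfold bub
      rw [hB ((y, 0) : HSp (N-1)) hR0]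
      unfold P
      rw [← Real.rpow_mul (le_of_lt hR0),
        show (-(((N:ℝ)-2)/2) * ((2:ℝ)/((N:ℝ)-2)) : ℝ) = -1 by field_simp,
        Real.rpow_neg_one]
    have key : PhicV π (N:ℝ) ε a₁ a₂ ((y, 0) : HSp (N-1))
        = q y - (N:ℝ) * (Rf ((y, 0) : HSp (N-1)))⁻¹ * Φ (y, 0) := by
      rw [hq y, hΦ (y, 0)]
      unfold PhicV K1V K0V K0 P pq
      dsimp only
      simp only [show ((0:ℝ)+1)^2 = (1:ℝ) by norm_num, hRy]
      rw [show (-((N:ℝ)/2)-2 : ℝ) = -((N:ℝ)/2)-1-1 by ring]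
      simp only [Real.rpow_sub_one h0]
      rw [Real.rpow_neg (le_of_lt hR0)]
      have hPow : (0:ℝ) < Rf ((y, 0) : HSp (N-1)) ^ ((N:ℝ)/2) :=
        Real.rpow_pos_of_pos hR0 _
      field_simp
      ring
    have hval : -(((N:ℝ)) * bub N 1 0 y ^ ((2:ℝ)/((N:ℝ)-2)) * Ξ (y,0) + q y)
        = -((N:ℝ) * bub N 1 0 y ^ ((2:ℝ)/((N:ℝ)-2)) * Ψ (y,0))
          - PhicV π (N:ℝ) ε a₁ a₂ ((y, 0) : HSp (N-1)) := by
      rw [hΞ (y,0), hw, key]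
      ring
    rw [hval]
    exact Filter.Tendsto.congr' (hev.mono fun t ht => ht.symm) hcomb
end
end

section
/- Let N ≥ 5 and a₁ ∈ ℝ. The function Φ₁(x) = (1/(4(N−4))) (x_N+1)/(|x̄|² + (x_N+1)²)^{(N−4)/2} + a₁ (x_N+1)/(|x̄|² + (x_N+1)²)^{N/2} satisfies −ΔΦ₁(x) = (x_N+1)/(|x̄|² + (x_N+1)²)^{(N−2)/2} for all x ∈ ℝ^N_+. -/
/-!
With `t = x_N + 1` and `s = |x̄|² + t²`, a direct computation of the Hessian of `t s^c` gives
`Δ(t s^c) = 2c (2c + N) t s^(c-1)` wherever `t > 0`. For `c = -N/2` the right-hand side vanishes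
(`t s^(-N/2)` is a Poisson kernel), and for `c = -(N-4)/2` the coefficient is `-4(N-4)`, which the
factor `1/(4(N-4))` normalises; the Laplacian is linear on `C²` functions.
-/

open MeasureTheory Filter Topology

noncomputable section

variable {n : ℕ}

section Linearity

variable {f g : HSp n → ℝ} {x : HSp n}

lemma pdv_pdv_linear_combination (hf : ContDiffAt ℝ 2 f x) (hg : ContDiffAt ℝ 2 g x)
    (a b : ℝ) (v w : HSp n) :
    pdv w (pdv v fun y ↦ a * f y + b * g y) x =
      a * pdv w (pdv v f) x + b * pdv w (pdv v g) x := by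
  have hdiff {h : HSp n → ℝ} (hh : ContDiffAt ℝ 2 h x) :
      ∀ᶠ y in 𝓝 x, DifferentiableAt ℝ h y :=
    (hh.eventually (by simp)).mono fun y hy ↦ hy.differentiableAt (by simp)
  have hfirst : pdv v (fun y ↦ a * f y + b * g y) =ᶠ[𝓝 x]
      fun y ↦ a * pdv v f y + b * pdv v g y := by
    filter_upwards [hdiff hf, hdiff hg] with y hfy hgy
    simp [pdv, fderiv_fun_add (hfy.const_mul a) (hgy.const_mul b), fderiv_const_mul hfy,
      fderiv_const_mul hgy]
  have hpdv {h : HSp n → ℝ} (hh : ContDiffAt ℝ 2 h x) : DifferentiableAt ℝ (pdv v h) x :=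
    ((hh.fderiv_right (m := 1) (by norm_num)).differentiableAt (by simp)).clm_apply
      (differentiableAt_const v)
  rw [pdv, hfirst.fderiv_eq, fderiv_fun_add ((hpdv hf).const_mul a) ((hpdv hg).const_mul b),
    fderiv_const_mul (hpdv hf), fderiv_const_mul (hpdv hg)]
  rfl

lemma lap_linear_combination (hf : ContDiffAt ℝ 2 f x) (hg : ContDiffAt ℝ 2 g x) (a b : ℝ) :
    lap (fun y ↦ a * f y + b * g y) x = a * lap f x + b * lap g x := by
  simp only [lap, pdv_pdv_linear_combination hf hg, Finset.sum_add_distrib, ← Finset.mul_sum]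
  ring

end Linearity

section HeightPow

open ContinuousLinearMap

def shiftedSqNorm (y : HSp n) : ℝ := ‖y.1‖ ^ 2 + (y.2 + 1) ^ 2

def heightPow (c : ℝ) (y : HSp n) : ℝ := (y.2 + 1) * shiftedSqNorm y ^ c

def dShiftedSqNorm (y : HSp n) : HSp n →L[ℝ] ℝ :=
  (2 : ℝ) • ((innerSL ℝ y.1).comp (fst ℝ _ _) + (y.2 + 1) • snd ℝ _ _)

@[simp]
lemma dShiftedSqNorm_apply (y v : HSp n) :
    dShiftedSqNorm y v = 2 * (inner ℝ y.1 v.1 + (y.2 + 1) * v.2) := rfl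

lemma shiftedSqNorm_pos {y : HSp n} (hy : -1 < y.2) : 0 < shiftedSqNorm y := by
  unfold shiftedSqNorm
  have : 0 < y.2 + 1 := by linarith
  positivity

lemma hasFDerivAt_shiftedSqNorm (y : HSp n) :
    HasFDerivAt shiftedSqNorm (dShiftedSqNorm y) y := by
  refine (hasFDerivAt_fst.norm_sq.add ((hasFDerivAt_snd.add_const 1).pow 2)).congr_fderiv ?_
  refine ContinuousLinearMap.ext fun v ↦ ?_
  simp only [add_apply, smul_apply, comp_apply, coe_fst', coe_snd', coe_innerSL_apply, smul_eq_mul,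
    nsmul_eq_mul, dShiftedSqNorm_apply]
  ring

lemma hasFDerivAt_dShiftedSqNorm_apply (y v : HSp n) :
    HasFDerivAt (fun z ↦ dShiftedSqNorm z v)
      ((2 : ℝ) • ((innerSL ℝ v.1).comp (fst ℝ _ _) + v.2 • snd ℝ _ _)) y := by
  refine ((ContinuousLinearMap.hasFDerivAt _).add_const (2 * v.2)).congr_of_eventuallyEq
    (.of_forall fun z ↦ ?_)
  simp only [add_apply, smul_apply, comp_apply, coe_fst', coe_snd', coe_innerSL_apply, smul_eq_mul,
    dShiftedSqNorm_apply, real_inner_comm]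
  ring

lemma hasFDerivAt_heightPow (c : ℝ) {y : HSp n} (hy : -1 < y.2) :
    HasFDerivAt (heightPow c)
      ((y.2 + 1) • (c * shiftedSqNorm y ^ (c - 1)) • dShiftedSqNorm y
        + shiftedSqNorm y ^ c • snd ℝ _ _) y :=
  (hasFDerivAt_snd.add_const 1).mul
    ((hasFDerivAt_shiftedSqNorm y).rpow_const (Or.inl (shiftedSqNorm_pos hy).ne'))

lemma pdv_heightPow (c : ℝ) {y : HSp n} (hy : -1 < y.2) (v : HSp n) :
    pdv v (heightPow c) y = c * (y.2 + 1) * shiftedSqNorm y ^ (c - 1) * dShiftedSqNorm y v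
      + v.2 * shiftedSqNorm y ^ c := by
  rw [pdv, (hasFDerivAt_heightPow c hy).fderiv]
  simp only [add_apply, smul_apply, coe_snd', smul_eq_mul]
  ring

lemma pdv_pdv_heightPow (c : ℝ) {x : HSp n} (hx : -1 < x.2) (v w : HSp n) :
    pdv w (pdv v (heightPow c)) x =
      c * ((c - 1) * (x.2 + 1) * shiftedSqNorm x ^ (c - 2) * dShiftedSqNorm x w * dShiftedSqNorm x v
        + shiftedSqNorm x ^ (c - 1) * (w.2 * dShiftedSqNorm x v + v.2 * dShiftedSqNorm x w
          + 2 * (x.2 + 1) * (inner ℝ v.1 w.1 + v.2 * w.2))) := by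
  have hopen : IsOpen {y : HSp n | -1 < y.2} := isOpen_lt continuous_const continuous_snd
  have hfirst : pdv v (heightPow c) =ᶠ[𝓝 x] fun y ↦
      c * (y.2 + 1) * shiftedSqNorm y ^ (c - 1) * dShiftedSqNorm y v
        + v.2 * shiftedSqNorm y ^ c := by
    filter_upwards [hopen.mem_nhds hx] with y hy using pdv_heightPow c hy v
  have hs := (shiftedSqNorm_pos hx).ne'
  have hderiv : HasFDerivAt (fun y ↦ c * (y.2 + 1) * shiftedSqNorm y ^ (c - 1)
      * dShiftedSqNorm y v + v.2 * shiftedSqNorm y ^ c) _ x :=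
    ((((hasFDerivAt_snd.add_const 1).const_mul c).mul
      ((hasFDerivAt_shiftedSqNorm x).rpow_const (p := c - 1) (Or.inl hs))).mul
      (hasFDerivAt_dShiftedSqNorm_apply x v)).add
    (((hasFDerivAt_shiftedSqNorm x).rpow_const (p := c) (Or.inl hs)).const_mul v.2)
  rw [pdv, hfirst.fderiv_eq, hderiv.fderiv]
  simp only [add_apply, smul_apply, coe_comp, Function.comp_apply, coe_fst', coe_snd', smul_eq_mul,
    Pi.mul_apply, innerSL_apply_apply, dShiftedSqNorm_apply, show c - 1 - 1 = c - 2 by ring]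
  ring

lemma lap_heightPow (c : ℝ) {x : HSp n} (hx : -1 < x.2) :
    lap (heightPow c) x = 2 * c * (2 * c + n + 1) * (x.2 + 1) * shiftedSqNorm x ^ (c - 1) := by
  have hnorm : ∑ i, x.1 i ^ 2 = shiftedSqNorm x - (x.2 + 1) ^ 2 := by
    simp [shiftedSqNorm, EuclideanSpace.norm_sq_eq]
  have hpow : shiftedSqNorm x ^ (c - 2) * shiftedSqNorm x = shiftedSqNorm x ^ (c - 1) := by
    rw [← Real.rpow_add_one (shiftedSqNorm_pos hx).ne']
    ring_nf
  have hhoriz : ∀ i, pdv (eH i) (pdv (eH i) (heightPow c)) x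
      = 4 * c * (c - 1) * (x.2 + 1) * shiftedSqNorm x ^ (c - 2) * x.1 i ^ 2
        + 2 * c * (x.2 + 1) * shiftedSqNorm x ^ (c - 1) := by
    intro i
    simp only [pdv_pdv_heightPow c hx, eH, dShiftedSqNorm_apply, EuclideanSpace.inner_single_right,
      PiLp.single_apply, if_pos, Real.ringHom_apply]
    ring
  rw [lap, Finset.sum_congr rfl fun i _ ↦ hhoriz i, Finset.sum_add_distrib, ← Finset.mul_sum,
    hnorm, Finset.sum_const, Finset.card_univ, Fintype.card_fin, nsmul_eq_mul,
    pdv_pdv_heightPow c hx]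
  simp only [dShiftedSqNorm_apply, eV, inner_zero_right]
  linear_combination (4 * c * (c - 1) * (x.2 + 1)) * hpow

lemma contDiffAt_heightPow (c : ℝ) {x : HSp n} (hx : -1 < x.2) :
    ContDiffAt ℝ 2 (heightPow c) x := by
  have hs : ContDiff ℝ 2 (shiftedSqNorm : HSp n → ℝ) :=
    ((contDiff_norm_sq ℝ).comp contDiff_fst).add ((contDiff_snd.add contDiff_const).pow 2)
  exact (contDiffAt_snd.add contDiffAt_const).mul
    (hs.contDiffAt.rpow_const_of_ne (shiftedSqNorm_pos hx).ne')

end HeightPow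

/-- `-ΔΦ₁ = (x_N+1)/(|x̄|² + (x_N+1)²)^{(N-2)/2}` in the upper half-space. -/
theorem Phi1_solves (N : ℕ) (hN : 5 ≤ N) (a₁ : ℝ) (Φ₁ : HSp (N - 1) → ℝ)
    (hΦ₁ : ∀ x : HSp (N - 1), Φ₁ x =
      1 / (4 * ((N : ℝ) - 4)) * (x.2 + 1)
          / (‖x.1‖ ^ 2 + (x.2 + 1) ^ 2) ^ (((N : ℝ) - 4) / 2)
        + a₁ * (x.2 + 1) / (‖x.1‖ ^ 2 + (x.2 + 1) ^ 2) ^ ((N : ℝ) / 2)) :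
    ∀ x ∈ upperHalf (N - 1),
      -(lap Φ₁ x) = (x.2 + 1) / (‖x.1‖ ^ 2 + (x.2 + 1) ^ 2) ^ (((N : ℝ) - 2) / 2) := by
  intro x hx
  have hx' : -1 < x.2 := by linarith [show 0 < x.2 from hx]
  have hN4 : (N : ℝ) - 4 ≠ 0 := by
    have : (5 : ℝ) ≤ N := by exact_mod_cast hN
    linarith
  have hΦ : Φ₁ = fun y ↦ 1 / (4 * ((N : ℝ) - 4)) * heightPow (-(((N : ℝ) - 4) / 2)) y
      + a₁ * heightPow (-((N : ℝ) / 2)) y := by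
    funext y
    rw [hΦ₁, heightPow, heightPow, shiftedSqNorm, Real.rpow_neg (by positivity),
      Real.rpow_neg (by positivity)]
    ring
  rw [hΦ, lap_linear_combination (contDiffAt_heightPow _ hx') (contDiffAt_heightPow _ hx'),
    lap_heightPow _ hx', lap_heightPow _ hx', Nat.cast_sub (by omega),
    show -(((N : ℝ) - 4) / 2) - 1 = -(((N : ℝ) - 2) / 2) by ring,
    Real.rpow_neg (shiftedSqNorm_pos hx').le, shiftedSqNorm]
  field_simp
  ring
end
end

section
/- For N = 5, the following exact integral identity holds: ∫_{ℝ⁵_+} x₅² |∇_{x̄} W_{1,0}(x)|² dx = |S³|/8, where ∇_{x̄} denotes the gradient with respect to the first four variables x₁,…,x₄ and |S³| = 2π² is the surface area of the unit 3-sphere. -/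
open MeasureTheory Filter Topology

noncomputable section

/-- The bubble `W_{1,0}` in dimension `N = 5`. -/
def W5 : HSp 4 → ℝ := fun x => 1 / (‖x.1‖ ^ 2 + (x.2 + 1) ^ 2) ^ ((3 : ℝ) / 2)

/-!
With `q = |x̄|² + (x₅ + 1)²` one has `W_{1,0} = q^(-3/2)`, so `|∇_{x̄} W_{1,0}|² = 9 |x̄|² / q⁵`.
For fixed `x₅ = t` the integral over `x̄ ∈ ℝ⁴` is radial: in polar coordinates it is
`|S³| · 9 ∫₀^∞ r⁵ / (r² + a²)⁵ dr = 3π² / (4a⁴)` with `a = t + 1`, and it remains to integrate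
`t² · 3π² / (4 (t + 1)⁴)` over `t > 0`, which gives `π²/4`. Both one-variable integrals have
antiderivatives that are polynomials in `1 / (r² + a²)`, resp. `1 / (t + 1)`.
-/

open Set Real

lemma hasDerivAt_antideriv_pow_five_div_sq_add_sq_pow_five {a : ℝ} (ha : a ≠ 0) (x : ℝ) :
    HasDerivAt
      (fun r : ℝ => -(r ^ 2 + a ^ 2)⁻¹ ^ 2 / 4 + a ^ 2 * (r ^ 2 + a ^ 2)⁻¹ ^ 3 / 3
        - a ^ 4 * (r ^ 2 + a ^ 2)⁻¹ ^ 4 / 8)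
      (x ^ 5 / (x ^ 2 + a ^ 2) ^ 5) x := by
  have hq : x ^ 2 + a ^ 2 ≠ 0 := by positivity
  have hv : HasDerivAt (fun r : ℝ => (r ^ 2 + a ^ 2)⁻¹) (-(2 * x) / (x ^ 2 + a ^ 2) ^ 2) x :=
    (((hasDerivAt_pow 2 x).add_const (a ^ 2)).inv hq).congr_deriv (by norm_num)
  refine ((((hv.fun_pow 2).fun_neg.div_const 4).fun_add
    (((hv.fun_pow 3).const_mul (a ^ 2)).div_const 3)).fun_sub
    (((hv.fun_pow 4).const_mul (a ^ 4)).div_const 8)).congr_deriv ?_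
  norm_num only
  field_simp
  ring

lemma tendsto_antideriv_pow_five_div_sq_add_sq_pow_five (a : ℝ) :
    Tendsto
      (fun r : ℝ => -(r ^ 2 + a ^ 2)⁻¹ ^ 2 / 4 + a ^ 2 * (r ^ 2 + a ^ 2)⁻¹ ^ 3 / 3
        - a ^ 4 * (r ^ 2 + a ^ 2)⁻¹ ^ 4 / 8)
      atTop (𝓝 0) := by
  have hv : Tendsto (fun r : ℝ => (r ^ 2 + a ^ 2)⁻¹) atTop (𝓝 0) :=
    tendsto_inv_atTop_zero.comp
      (tendsto_atTop_add_const_right _ _ (tendsto_pow_atTop two_ne_zero))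
  have hP : Tendsto (fun v : ℝ => -v ^ 2 / 4 + a ^ 2 * v ^ 3 / 3 - a ^ 4 * v ^ 4 / 8)
      (𝓝 0) (𝓝 0) := by
    simpa using (by fun_prop : Continuous
      fun v : ℝ => -v ^ 2 / 4 + a ^ 2 * v ^ 3 / 3 - a ^ 4 * v ^ 4 / 8).tendsto 0
  exact hP.comp hv

lemma integrableOn_Ioi_pow_five_div_sq_add_sq_pow_five {a : ℝ} (ha : a ≠ 0) :
    IntegrableOn (fun r : ℝ => r ^ 5 / (r ^ 2 + a ^ 2) ^ 5) (Ioi 0) :=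
  integrableOn_Ioi_deriv_of_nonneg'
    (fun x _ => hasDerivAt_antideriv_pow_five_div_sq_add_sq_pow_five ha x)
    (fun x (hx : 0 < x) => by positivity)
    (tendsto_antideriv_pow_five_div_sq_add_sq_pow_five a)

lemma integral_Ioi_pow_five_div_sq_add_sq_pow_five {a : ℝ} (ha : a ≠ 0) :
    ∫ r in Ioi (0 : ℝ), r ^ 5 / (r ^ 2 + a ^ 2) ^ 5 = 1 / (24 * a ^ 4) := by
  rw [integral_Ioi_of_hasDerivAt_of_nonneg'
    (fun x _ => hasDerivAt_antideriv_pow_five_div_sq_add_sq_pow_five ha x)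
    (fun x (hx : 0 < x) => by positivity)
    (tendsto_antideriv_pow_five_div_sq_add_sq_pow_five a)]
  field_simp
  ring

lemma hasDerivAt_antideriv_sq_div_add_one_pow_four {x : ℝ} (hx : x ≠ -1) :
    HasDerivAt (fun t : ℝ => -(t + 1)⁻¹ + (t + 1)⁻¹ ^ 2 - (t + 1)⁻¹ ^ 3 / 3)
      (x ^ 2 / (x + 1) ^ 4) x := by
  have hx1 : x + 1 ≠ 0 := fun h => hx (by linarith)
  have hv : HasDerivAt (fun t : ℝ => (t + 1)⁻¹) (-1 / (x + 1) ^ 2) x :=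
    (((hasDerivAt_id x).add_const 1).inv hx1).congr_deriv (by norm_num)
  refine ((hv.fun_neg.fun_add (hv.fun_pow 2)).fun_sub ((hv.fun_pow 3).div_const 3)).congr_deriv ?_
  norm_num only
  field_simp
  ring

lemma tendsto_antideriv_sq_div_add_one_pow_four :
    Tendsto (fun t : ℝ => -(t + 1)⁻¹ + (t + 1)⁻¹ ^ 2 - (t + 1)⁻¹ ^ 3 / 3) atTop (𝓝 0) := by
  have hv : Tendsto (fun t : ℝ => (t + 1)⁻¹) atTop (𝓝 0) :=
    tendsto_inv_atTop_zero.comp (tendsto_atTop_add_const_right _ _ tendsto_id)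
  have hP : Tendsto (fun v : ℝ => -v + v ^ 2 - v ^ 3 / 3) (𝓝 0) (𝓝 0) := by
    simpa using (by fun_prop : Continuous fun v : ℝ => -v + v ^ 2 - v ^ 3 / 3).tendsto 0
  exact hP.comp hv

lemma integral_Ioi_sq_div_add_one_pow_four :
    ∫ t in Ioi (0 : ℝ), t ^ 2 / (t + 1) ^ 4 = 1 / 3 := by
  rw [integral_Ioi_of_hasDerivAt_of_nonneg'
    (fun x (hx : 0 ≤ x) => hasDerivAt_antideriv_sq_div_add_one_pow_four (by linarith))
    (fun x _ => by positivity) tendsto_antideriv_sq_div_add_one_pow_four]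
  norm_num

lemma measureReal_ball_fin_four :
    volume.real (Metric.ball (0 : EuclideanSpace ℝ (Fin 4)) 1) = π ^ 2 / 2 := by
  rw [measureReal_def, InnerProductSpace.volume_ball_of_dim_even (k := 2) (by simp)]
  simp [ENNReal.toReal_ofReal (by positivity : (0 : ℝ) ≤ π ^ 2 / 2)]

lemma integrable_norm_sq_div_norm_sq_add_sq_pow_five {a : ℝ} (ha : a ≠ 0) :
    Integrable (fun y : EuclideanSpace ℝ (Fin 4) => ‖y‖ ^ 2 / (‖y‖ ^ 2 + a ^ 2) ^ 5) := by
  refine (integrable_fun_norm_addHaar volume (f := fun r => r ^ 2 / (r ^ 2 + a ^ 2) ^ 5)).2 ?_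
  simp only [finrank_euclideanSpace, Fintype.card_fin, smul_eq_mul, mul_div_assoc', ← pow_add]
  exact integrableOn_Ioi_pow_five_div_sq_add_sq_pow_five ha

lemma integral_norm_sq_div_norm_sq_add_sq_pow_five {a : ℝ} (ha : a ≠ 0) :
    ∫ y : EuclideanSpace ℝ (Fin 4), ‖y‖ ^ 2 / (‖y‖ ^ 2 + a ^ 2) ^ 5 = π ^ 2 / (12 * a ^ 4) := by
  rw [integral_fun_norm_addHaar volume (fun r => r ^ 2 / (r ^ 2 + a ^ 2) ^ 5)]
  simp only [finrank_euclideanSpace, Fintype.card_fin, smul_eq_mul, mul_div_assoc', ← pow_add,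
    integral_Ioi_pow_five_div_sq_add_sq_pow_five ha, measureReal_ball_fin_four, nsmul_eq_mul]
  field_simp
  ring

/-- The squared Euclidean distance from `x` to the pole `(0, -1)` of the bubble (the norm on
`HSp n` itself is the sup norm of the product). -/
def poleDistSq {n : ℕ} (x : HSp n) : ℝ := ‖x.1‖ ^ 2 + (x.2 + 1) ^ 2

lemma poleDistSq_pos {n : ℕ} {x : HSp n} (hx : x.2 ≠ -1) : 0 < poleDistSq x := by
  have : x.2 + 1 ≠ 0 := fun h => hx (by linarith)
  unfold poleDistSq
  positivity

lemma hasFDerivAt_poleDistSq {n : ℕ} (x : HSp n) :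
    HasFDerivAt poleDistSq
      (2 • (innerSL ℝ x.1).comp (ContinuousLinearMap.fst ℝ _ ℝ)
        + (2 * (x.2 + 1)) • ContinuousLinearMap.snd ℝ (EuclideanSpace ℝ (Fin n)) ℝ) x := by
  refine ((hasFDerivAt_fst (p := x)).norm_sq.fun_add
    (((hasFDerivAt_snd (p := x)).add_const 1).pow 2)).congr_fderiv ?_
  ext v <;> simp [mul_add]

lemma W5_eq_rpow_poleDistSq : W5 = fun x => poleDistSq x ^ (-(3 / 2 : ℝ)) := by
  funext x
  rw [W5, Real.rpow_neg (by unfold poleDistSq; positivity), one_div, poleDistSq]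

lemma pdv_eH_rpow_poleDistSq {n : ℕ} (s : ℝ) {x : HSp n} (hx : x.2 ≠ -1) (i : Fin n) :
    pdv (eH i) (fun y => poleDistSq y ^ s) x = s * poleDistSq x ^ (s - 1) * (2 * x.1 i) := by
  rw [pdv, ((hasFDerivAt_poleDistSq x).rpow_const (Or.inl (poleDistSq_pos hx).ne')).fderiv]
  simp [eH, EuclideanSpace.inner_single_right]

lemma sum_sq_pdv_eH_W5 {x : HSp 4} (hx : x.2 ≠ -1) :
    ∑ i, pdv (eH i) W5 x ^ 2 = 9 * (‖x.1‖ ^ 2 / poleDistSq x ^ 5) := by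
  have hq := poleDistSq_pos hx
  have hpow : (poleDistSq x ^ (-(3 / 2 : ℝ) - 1)) ^ 2 = (poleDistSq x ^ 5)⁻¹ := by
    rw [← Real.rpow_mul_natCast hq.le, ← Real.rpow_natCast, ← Real.rpow_neg hq.le]
    norm_num
  simp only [W5_eq_rpow_poleDistSq, pdv_eH_rpow_poleDistSq _ hx, mul_pow, hpow,
    EuclideanSpace.real_norm_sq_eq, ← Finset.mul_sum]
  ring

-- For `f ≥ 0` the lower integrals of `ofReal ∘ f` carry the computation, so unlike
-- `integral_prod_symm` no integrability of `f` on the product is needed.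
theorem integral_prod_symm_of_nonneg {α β : Type*} [MeasurableSpace α] [MeasurableSpace β]
    {μ : Measure α} {ν : Measure β} [SFinite μ] [SFinite ν] {f : α × β → ℝ} (hf₀ : 0 ≤ f)
    (hf : Measurable f) (hslice : ∀ᵐ y ∂ν, Integrable (fun x => f (x, y)) μ) :
    ∫ z, f z ∂μ.prod ν = ∫ y, ∫ x, f (x, y) ∂μ ∂ν := by
  rw [integral_eq_lintegral_of_nonneg_ae (ae_of_all _ hf₀) hf.aestronglyMeasurable,
    lintegral_prod_symm' _ hf.ennreal_ofReal,
    integral_eq_lintegral_of_nonneg_ae (f := fun y => ∫ x, f (x, y) ∂μ)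
      (ae_of_all _ fun y => integral_nonneg fun x => hf₀ _)
      hf.stronglyMeasurable.integral_prod_left'.aestronglyMeasurable]
  congr 1
  refine lintegral_congr_ae ?_
  filter_upwards [hslice] with y hy
  exact (ofReal_integral_eq_lintegral_ofReal hy (ae_of_all _ fun x => hf₀ _)).symm

lemma measurableSet_upperHalf (n : ℕ) : MeasurableSet (upperHalf n) :=
  measurableSet_lt measurable_const measurable_snd

lemma volume_restrict_upperHalf (n : ℕ) :
    volume.restrict (upperHalf n) = volume.prod (volume.restrict (Ioi (0 : ℝ))) := by
  have : upperHalf n = univ ×ˢ Ioi 0 := by ext; simp [upperHalf]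
  rw [this, Measure.volume_eq_prod, ← Measure.prod_restrict, Measure.restrict_univ]

/-- `∫_{ℝ⁵₊} x₅² |∇_{x̄} W_{1,0}|² dx = |S³|/8` where `|S³| = 2π²`. -/
theorem integral_x5sq_grad_horiz_W5 :
    (∫ x in upperHalf 4, x.2 ^ 2 * ∑ i, (pdv (eH i) W5 x) ^ 2)
      = (2 * Real.pi ^ 2) / 8 := by
  set F : HSp 4 → ℝ := fun x => x.2 ^ 2 * (9 * (‖x.1‖ ^ 2 / poleDistSq x ^ 5))
  have hslice : ∀ t : ℝ, 0 < t → ∫ y, F (y, t) = 3 * π ^ 2 / 4 * (t ^ 2 / (t + 1) ^ 4) := by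
    intro t ht
    simp only [F, poleDistSq, integral_const_mul,
      integral_norm_sq_div_norm_sq_add_sq_pow_five (by positivity : t + 1 ≠ 0)]
    field_simp
    norm_num
  calc (∫ x in upperHalf 4, x.2 ^ 2 * ∑ i, (pdv (eH i) W5 x) ^ 2)
      = ∫ x in upperHalf 4, F x :=
        setIntegral_congr_fun (measurableSet_upperHalf 4) fun x (hx : 0 < x.2) => by
          rw [sum_sq_pdv_eH_W5 (by linarith)]
    _ = ∫ t in Ioi 0, ∫ y, F (y, t) := by
        rw [volume_restrict_upperHalf]
        refine integral_prod_symm_of_nonneg (fun x => ?_) (by unfold F poleDistSq; fun_prop) ?_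
        · unfold F poleDistSq; positivity
        · filter_upwards [ae_restrict_mem measurableSet_Ioi] with t (ht : 0 < t)
          exact ((integrable_norm_sq_div_norm_sq_add_sq_pow_five
            (by positivity : t + 1 ≠ 0)).const_mul 9).const_mul (t ^ 2)
    _ = ∫ t in Ioi 0, 3 * π ^ 2 / 4 * (t ^ 2 / (t + 1) ^ 4) :=
        setIntegral_congr_fun measurableSet_Ioi hslice
    _ = 2 * π ^ 2 / 8 := by
        rw [integral_const_mul, integral_Ioi_sq_div_add_one_pow_four]
        ring
end
end
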